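/- arXiv:1209.1768 — 9 statements merged into one kernel-verified Lean document; each statement's English description precedes it below -/
import Mathlib

section
/- Let G be a finite group with subgroups A and B where A is abelian and B ≤ N_G(A). Let F be an algebraically closed field of characteristic ℓ, with ℓ = 0 or ℓ coprime to |A|, and let M be an FG-module. For a linear F-character α of A set M_α = {m ∈ M : a·m = α(a)·m for all a ∈ A}. Suppose M_α ≠ 0 and the stabilizer C = Stab_B(α) has a common eigenvector v ∈ M_α with c·v = γ(c)·v for all c ∈ C, for some linear F-character γ of C. Then M restricted to B contains a submodule isomorphic to the induced module Ind_C^B(γ). In particular, if C = 1 then M|_B contains a copy of the regular FB-module. -/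
/-!
A function `f` in the induced module is sent to `∑ f(t) • ρ(t⁻¹) v`, the sum over representatives
`t` of the right cosets `C t`. Since `v` affords `γ` on `C`, a summand depends only on the coset of
`t`, which makes the map `B`-equivariant. For `t ∈ B` the vector `ρ(t⁻¹) v` is an `A`-eigenvector
with character `a ↦ α(t a t⁻¹)`; as `C` is the stabilizer of `α`, distinct cosets in `B` give
distinct characters, and eigenvectors with distinct characters are linearly independent, so the
map is injective.
-/

open scoped Classical BigOperators

/-- The induced module `Ind_C^B(γ)`, modelled as the space of functions `f : G → F`
supported on `B` satisfying `f (c * x) = γ c * f x` for `c ∈ C`, with `B` acting by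
right translation. -/
def indSubmodule (F : Type) [Field F] (G : Type) [Group G] (B C : Subgroup G)
    (γ : G → F) : Submodule F (G → F) where
  carrier := {f | (∀ x : G, x ∉ B → f x = 0) ∧ ∀ c ∈ C, ∀ x : G, f (c * x) = γ c * f x}
  add_mem' := by
    rintro f g ⟨hf1, hf2⟩ ⟨hg1, hg2⟩
    refine ⟨fun x hx => ?_, fun c hc x => ?_⟩
    · simp [Pi.add_apply, hf1 x hx, hg1 x hx]
    · simp only [Pi.add_apply, hf2 c hc x, hg2 c hc x]; ring
  zero_mem' := ⟨fun x _ => rfl, fun c hc x => by simp⟩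
  smul_mem' := by
    rintro a f ⟨hf1, hf2⟩
    refine ⟨fun x hx => ?_, fun c hc x => ?_⟩
    · simp [hf1 x hx]
    · simp only [Pi.smul_apply, smul_eq_mul, hf2 c hc x]; ring

namespace Module.End

variable {ι κ K M : Type*} [Field K] [AddCommGroup M] [Module K M] (f : κ → End K M)

theorem iSupIndep_iInf_eigenspace :
    iSupIndep fun χ : κ → K ↦ ⨅ k, (f k).eigenspace (χ k) := by
  set E := fun χ : κ → K ↦ ⨅ k, (f k).eigenspace (χ k)
  have mem_E {χ : κ → K} {x : M} : x ∈ E χ ↔ ∀ k, f k x = χ k • x := by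
    simp [E, Submodule.mem_iInf]
  suffices ∀ χ (s : Finset (κ → K)), χ ∉ s → Disjoint (E χ) (s.sup E) by
    simpa only [iSupIndep_iff_supIndep, Finset.supIndep_iff_disjoint_erase] using
      fun s χ _ ↦ this _ _ (s.notMem_erase χ)
  intro χ₀ s
  induction s using Finset.induction_on with
  | empty => simp
  | insert χ₁ s _ ih =>
    rw [Finset.mem_insert, not_or]
    rintro ⟨hne, hχ₀⟩
    obtain ⟨k, hk⟩ : ∃ k, χ₀ k ≠ χ₁ k := Function.ne_iff.mp hne
    set g := f k - χ₁ k • 1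
    have hg : ∀ χ, ∀ x ∈ E χ, g x = (χ k - χ₁ k) • x := fun χ x hx ↦ by
      simp [g, (mem_E.mp hx) k, sub_smul]
    -- every `E χ` is `f k`-stable, so no commutation of the `f k` is needed
    have hgs : s.sup E ≤ (s.sup E).comap g := Finset.sup_le fun χ hχ x hx ↦ by
      simpa [hg χ x hx] using Submodule.smul_mem _ _ (Finset.le_sup (f := E) hχ hx)
    rw [Finset.sup_insert, Submodule.disjoint_def]
    intro x hx hx'
    obtain ⟨y, hy, z, hz, rfl⟩ := Submodule.mem_sup.mp hx'
    have hgx : (χ₀ k - χ₁ k) • (y + z) ∈ E χ₀ ⊓ s.sup E := by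
      refine ⟨Submodule.smul_mem _ _ hx, ?_⟩
      rw [← hg χ₀ _ hx, map_add, hg χ₁ y hy, sub_self, zero_smul, zero_add]
      exact hgs hz
    rw [(ih hχ₀).eq_bot, Submodule.mem_bot, smul_eq_zero] at hgx
    exact hgx.resolve_left (sub_ne_zero.mpr hk)

theorem simultaneousEigenvectors_linearIndependent (χ : ι → κ → K) (hχ : Function.Injective χ)
    (v : ι → M) (hv₀ : ∀ i, v i ≠ 0) (hv : ∀ i k, f k (v i) = χ i k • v i) :
    LinearIndependent K v :=
  (iSupIndep_iInf_eigenspace f).comp hχ |>.linearIndependent _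
    (fun i ↦ by simp [Submodule.mem_iInf, hv]) hv₀

end Module.End

theorem mul_inv_mem_of_forall_conj_eq {G X : Type*} [Group G] {A B C : Subgroup G} {α : G → X}
    (hB : B ≤ Subgroup.normalizer (A : Set G))
    (hC : ∀ x ∈ B, (∀ a ∈ A, α (x⁻¹ * a * x) = α a) → x ∈ C) {x y : G} (hx : x ∈ B)
    (hy : y ∈ B) (h : ∀ a ∈ A, α (x * a * x⁻¹) = α (y * a * y⁻¹)) : y * x⁻¹ ∈ C := by
  refine hC _ (mul_mem hy (inv_mem hx)) fun a ha ↦ ?_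
  have ha' : y⁻¹ * a * y ∈ A := by
    simpa using (Subgroup.mem_normalizer_iff.mp (inv_mem (hB hy)) a).mp ha
  convert h _ ha' using 2 <;> group

namespace Representation

variable {G F M : Type} [Group G] [Field F] [AddCommGroup M] [Module F M]
  (ρ : Representation F G M)

lemma smul_inv_apply_of_apply_eq_smul {g : G} {μ : F} {v : M} (h : ρ g v = μ • v) :
    μ • ρ g⁻¹ v = v := by
  rw [← map_smul, ← h, inv_self_apply]

lemma apply_inv_apply_of_mem_normalizer {A : Subgroup G} {α : G → F} {v : M}
    (hv : ∀ a ∈ A, ρ a v = α a • v) {x : G} (hx : x ∈ Subgroup.normalizer (A : Set G))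
    {a : G} (ha : a ∈ A) : ρ a (ρ x⁻¹ v) = α (x * a * x⁻¹) • ρ x⁻¹ v := by
  have hconj : a * x⁻¹ = x⁻¹ * (x * a * x⁻¹) := by group
  rw [← Module.End.mul_apply, ← map_mul, hconj, map_mul, Module.End.mul_apply,
    hv _ ((Subgroup.mem_normalizer_iff.mp hx a).mp ha), map_smul]

variable (B : Subgroup G) {C : Subgroup G} {γ : G → F} {v : M}
  (hvγ : ∀ c ∈ C, ρ c v = γ c • v)

noncomputable def inducedTerm :
    Quotient (QuotientGroup.rightRel C) → indSubmodule F G B C γ →ₗ[F] M :=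
  Quotient.lift
    (fun x ↦ (LinearMap.proj x ∘ₗ (indSubmodule F G B C γ).subtype).smulRight (ρ x⁻¹ v))
    fun x y hxy ↦ LinearMap.ext fun f ↦ by
      obtain ⟨c, hc, rfl⟩ : ∃ c ∈ C, y = c * x :=
        ⟨y * x⁻¹, QuotientGroup.rightRel_apply.mp hxy, by group⟩
      have hcv := ρ.smul_inv_apply_of_apply_eq_smul (hvγ c hc)
      simp only [LinearMap.smulRight_apply, LinearMap.comp_apply, Submodule.subtype_apply,
        LinearMap.proj_apply, f.2.2 c hc, mul_inv_rev, map_mul, Module.End.mul_apply]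
      rw [mul_comm, mul_smul, ← map_smul (ρ x⁻¹) (γ c), hcv]

lemma inducedTerm_mk (f : indSubmodule F G B C γ) (x : G) :
    ρ.inducedTerm B hvγ (Quotient.mk _ x) f = (f : G → F) x • ρ x⁻¹ v :=
  rfl

lemma inducedTerm_apply (f : indSubmodule F G B C γ) (q : Quotient (QuotientGroup.rightRel C)) :
    ρ.inducedTerm B hvγ q f = (f : G → F) q.out • ρ q.out⁻¹ v := by
  conv_lhs => rw [← Quotient.out_eq q]
  rfl

theorem linearIndependent_inv_apply_out {A : Subgroup G} {α : G → F}
    (hB : B ≤ Subgroup.normalizer (A : Set G))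
    (hC : ∀ x ∈ B, (∀ a ∈ A, α (x⁻¹ * a * x) = α a) → x ∈ C) (hv₀ : v ≠ 0)
    (hvα : ∀ a ∈ A, ρ a v = α a • v) :
    LinearIndependent F
      fun q : {q : Quotient (QuotientGroup.rightRel C) // q.out ∈ B} ↦ ρ q.1.out⁻¹ v := by
  refine Module.End.simultaneousEigenvectors_linearIndependent (fun a : A ↦ ρ a)
    (fun q a ↦ α (q.1.out * a * q.1.out⁻¹)) (fun q q' hqq' ↦ ?_) _
    (fun q hq ↦ hv₀ (by simpa using congrArg (ρ q.1.out) hq))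
    (fun q a ↦ ρ.apply_inv_apply_of_mem_normalizer hvα (hB q.2) a.2)
  exact Subtype.ext (Quotient.out_equiv_out.mp (QuotientGroup.rightRel_apply.mpr
    (mul_inv_mem_of_forall_conj_eq hB hC q.2 q'.2 fun a ha ↦ congrFun hqq' ⟨a, ha⟩)))

variable [Fintype G]

noncomputable def inducedMap : indSubmodule F G B C γ →ₗ[F] M :=
  ∑ q, ρ.inducedTerm B hvγ q

theorem inducedMap_translate (b : G) {f g : indSubmodule F G B C γ}
    (hgf : ∀ x, (g : G → F) x = (f : G → F) (x * b)) :
    ρ.inducedMap B hvγ g = ρ b (ρ.inducedMap B hvγ f) := by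
  let e : Quotient (QuotientGroup.rightRel C) ≃ Quotient (QuotientGroup.rightRel C) :=
    Quotient.congr (Equiv.mulRight b) fun x y ↦ by
      simp [QuotientGroup.rightRel_apply, mul_assoc]
  simp only [inducedMap, LinearMap.sum_apply, map_sum]
  refine Fintype.sum_equiv e _ _ fun q ↦ ?_
  induction q using Quotient.inductionOn with | h x => ?_
  rw [show e (Quotient.mk _ x) = Quotient.mk _ (x * b) from rfl, inducedTerm_mk, inducedTerm_mk,
    hgf, map_smul, ← Module.End.mul_apply, ← map_mul, mul_inv_rev, mul_inv_cancel_left]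

theorem inducedMap_injective {A : Subgroup G} {α : G → F}
    (hB : B ≤ Subgroup.normalizer (A : Set G))
    (hC : ∀ x ∈ B, (∀ a ∈ A, α (x⁻¹ * a * x) = α a) → x ∈ C) (hv₀ : v ≠ 0)
    (hvα : ∀ a ∈ A, ρ a v = α a • v) :
    Function.Injective (ρ.inducedMap B hvγ) := by
  rw [injective_iff_map_eq_zero]
  intro f hf
  have hsum : ∑ q : {q : Quotient (QuotientGroup.rightRel C) // q.out ∈ B},
      (f : G → F) q.1.out • ρ q.1.out⁻¹ v = 0 := by
    have houtside : ∑ q : {q : Quotient (QuotientGroup.rightRel C) // q.out ∉ B},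
        ρ.inducedTerm B hvγ q f = 0 :=
      Fintype.sum_eq_zero _ fun q ↦ by rw [inducedTerm_apply, f.2.1 _ q.2, zero_smul]
    rw [← hf, inducedMap, LinearMap.sum_apply, ← Fintype.sum_subtype_add_sum_subtype
      (fun q : Quotient _ ↦ q.out ∈ B), houtside, add_zero]
    simp only [inducedTerm_apply]
  have hout : ∀ q : Quotient (QuotientGroup.rightRel C), (f : G → F) q.out = 0 := fun q ↦ by
    by_cases hq : q.out ∈ B
    · exact Fintype.linearIndependent_iff.mp
        (ρ.linearIndependent_inv_apply_out B hB hC hv₀ hvα) _ hsum ⟨q, hq⟩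
    · exact f.2.1 _ hq
  ext x
  set t := (Quotient.mk (QuotientGroup.rightRel C) x).out
  have hc : x * t⁻¹ ∈ C := QuotientGroup.rightRel_apply.mp (Quotient.mk_out x)
  have hx := f.2.2 _ hc t
  rw [inv_mul_cancel_right, hout, mul_zero] at hx
  exact hx

end Representation

theorem stmt_1_general {G : Type} [Group G] [Fintype G]
    (F : Type) [Field F]
    (A B : Subgroup G)
    (hB : B ≤ Subgroup.normalizer (A : Set G))
    (M : Type) [AddCommGroup M] [Module F M]
    (ρ : Representation F G M)
    (α : G → F)
    (C : Subgroup G)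
    (hC : ∀ b : G, b ∈ C ↔ b ∈ B ∧ ∀ a ∈ A, α (b⁻¹ * a * b) = α a)
    (γ : G → F)
    (v : M) (hv : v ≠ 0)
    (hvα : ∀ a ∈ A, ρ a v = α a • v)
    (hvγ : ∀ c ∈ C, ρ c v = γ c • v) :
    ∃ Φ : ↥(indSubmodule F G B C γ) →ₗ[F] M,
      Function.Injective Φ ∧
      ∀ b ∈ B, ∀ f g : ↥(indSubmodule F G B C γ),
        (∀ x : G, (g : G → F) x = (f : G → F) (x * b)) →
        Φ g = ρ b (Φ f) :=
  ⟨ρ.inducedMap B hvγ, ρ.inducedMap_injective B hvγ hB (fun x hx h ↦ (hC x).2 ⟨hx, h⟩) hv hvα,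
    fun b _ _ _ ↦ ρ.inducedMap_translate B hvγ b⟩

/-- Let `G` be a finite group with subgroups `A`, `B`, where `A` is abelian
and `B ≤ N_G(A)`.  Let `F` be an algebraically closed field of characteristic `0` or
coprime to `|A|`, and `M` an `FG`-module.  Suppose the eigenspace `M_α` of a linear
`F`-character `α` of `A` is nonzero, and the common eigenvector `v ∈ M_α` of the
stabilizer `C = Stab_B(α)` affords the linear character `γ` of `C`.  Then `M|_B`
contains a submodule isomorphic to the induced module `Ind_C^B(γ)`. -/
theorem stmt_1 {G : Type} [Group G] [Fintype G]
    (F : Type) [Field F] [IsAlgClosed F]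
    (A B : Subgroup G)
    (hA : ∀ a ∈ A, ∀ b ∈ A, a * b = b * a)
    (hB : B ≤ Subgroup.normalizer (A : Set G))
    (hchar : ringChar F = 0 ∨ Nat.Coprime (ringChar F) (Nat.card A))
    (M : Type) [AddCommGroup M] [Module F M] [FiniteDimensional F M]
    (ρ : Representation F G M)
    (α : G → F) (hα1 : α 1 = 1)
    (hαmul : ∀ a ∈ A, ∀ b ∈ A, α (a * b) = α a * α b)
    (C : Subgroup G)
    (hC : ∀ b : G, b ∈ C ↔ b ∈ B ∧ ∀ a ∈ A, α (b⁻¹ * a * b) = α a)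
    (γ : G → F) (hγ1 : γ 1 = 1)
    (hγmul : ∀ c ∈ C, ∀ c' ∈ C, γ (c * c') = γ c * γ c')
    (v : M) (hv : v ≠ 0)
    (hvα : ∀ a ∈ A, ρ a v = α a • v)
    (hvγ : ∀ c ∈ C, ρ c v = γ c • v) :
    ∃ Φ : ↥(indSubmodule F G B C γ) →ₗ[F] M,
      Function.Injective Φ ∧
      ∀ b ∈ B, ∀ f g : ↥(indSubmodule F G B C γ),
        (∀ x : G, (g : G → F) x = (f : G → F) (x * b)) →
        Φ g = ρ b (Φ f) :=
  stmt_1_general F A B hB M ρ α C hC γ v hv hvα hvγ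
end

section
/- Let G = GL_n(q) and let s ∈ G be an element of order q^n − 1 acting irreducibly on the natural module. Then s is conjugate to s⁻¹ in G if and only if (n,q) ∈ {(2,2),(1,2),(1,3)}. -/
/-!
If `s` is conjugate to `s⁻¹`, then `s⁻¹` is a root of the characteristic polynomial of `s`.
By Schur's lemma the algebra `𝔽_q[s]` is a finite commutative domain, where that polynomial of
degree `n` has at most `n` roots. Since `s` has order `q^n - 1`, its Frobenius conjugates
`s^(q^i)`, `i < n`, are `n` distinct roots, so `s⁻¹ = s^(q^i)` for some `i < n`, that is
`q^n - 1 ∣ q^i + 1`, which only happens for `(n, q) ∈ {(2,2), (1,2), (1,3)}`. Conversely, for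
`n = 1` the order of `s` divides `2`, and every element of `GL₂(𝔽₂)` is conjugate to its inverse.
-/

open Polynomial

theorem Nat.eq_two_two_or_of_pow_le_pow_add_two {q n i : ℕ} (hq : 2 ≤ q) (hi : i < n)
    (hle : q ^ n ≤ q ^ i + 2) : (n = 2 ∧ q = 2) ∨ (n = 1 ∧ q = 2) ∨ (n = 1 ∧ q = 3) := by
  have hstep : q * q ^ i ≤ q ^ n := by
    rw [← pow_succ']
    exact Nat.pow_le_pow_right (by omega) hi
  rcases Nat.eq_zero_or_pos i with rfl | hi0
  · obtain rfl : n = 1 := by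
      by_contra hn1
      have : q ^ 2 ≤ q ^ n := Nat.pow_le_pow_right (by omega) (by omega)
      nlinarith
    rw [pow_one, pow_zero] at hle
    omega
  · have hqi : q ≤ q ^ i := Nat.le_self_pow hi0.ne' q
    obtain rfl : q = 2 := by nlinarith
    have hn2 : 2 ^ n = 2 ^ 2 := by nlinarith
    left
    exact ⟨Nat.pow_right_injective le_rfl hn2, rfl⟩

theorem injOn_pow_pow_of_orderOf_eq_pow_sub_one {M : Type*} [Monoid M] {x : M} {q n : ℕ}
    (hq : 2 ≤ q) (hx : orderOf x = q ^ n - 1) : Set.InjOn (fun i => x ^ q ^ i) (Set.Iio n) := by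
  intro i hi j hj hij
  by_contra hne
  wlog hlt : i < j generalizing i j
  · exact this hj hi hij.symm (Ne.symm hne) (by omega)
  have hqi : 1 ≤ q ^ i := Nat.one_le_pow _ _ (by omega)
  have hij' : q ^ i < q ^ j := Nat.pow_lt_pow_right (by omega) hlt
  have hjn : q ^ j < q ^ n := Nat.pow_lt_pow_right (by omega) hj
  have hfin : IsOfFinOrder x := orderOf_pos_iff.mp (by omega)
  have hdvd : q ^ n - 1 ∣ q ^ j - q ^ i := by
    rw [← hx, ← Nat.modEq_iff_dvd' hij'.le, ← hfin.pow_eq_pow_iff_modEq]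
    exact hij
  have := Nat.le_of_dvd (by omega) hdvd
  omega

theorem Polynomial.mem_of_isRoot_of_natDegree_le_card {R : Type*} [CommRing R] [IsDomain R]
    {p : R[X]} (hp : p ≠ 0) {S : Finset R} (hS : ∀ z ∈ S, p.IsRoot z)
    (hdeg : p.natDegree ≤ S.card) {y : R} (hy : p.IsRoot y) : y ∈ S := by
  classical
  have hsub : S ⊆ p.roots.toFinset := fun z hz => by simpa [hp] using hS z hz
  rw [Finset.eq_of_subset_of_card_le hsub
    ((Multiset.toFinset_card_le _).trans (p.card_roots'.trans hdeg))]
  simpa [hp] using hy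

theorem FiniteField.aeval_pow_card_pow_eq_zero {F R : Type*} [Field F] [Fintype F]
    [CommSemiring R] [Algebra F R] {p : F[X]} {x : R} (hx : aeval x p = 0) (i : ℕ) :
    aeval (x ^ Fintype.card F ^ i) p = 0 := by
  induction i with
  | zero => simpa
  | succ i ih =>
    rw [pow_succ, pow_mul, ← expand_aeval, FiniteField.expand_card, map_pow, ih,
      zero_pow Fintype.card_ne_zero]

theorem FiniteField.exists_eq_pow_card_pow_of_aeval_eq_zero {F R : Type*} [Field F] [Fintype F]
    [CommRing R] [IsDomain R] [Algebra F R] {n : ℕ} {x y : R}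
    (hx : orderOf x = Fintype.card F ^ n - 1) {p : F[X]} (hp : p ≠ 0) (hdeg : p.natDegree ≤ n)
    (hpx : aeval x p = 0) (hpy : aeval y p = 0) : ∃ i < n, y = x ^ Fintype.card F ^ i := by
  classical
  have hinj := injOn_pow_pow_of_orderOf_eq_pow_sub_one Fintype.one_lt_card hx
  have hy : y ∈ (Finset.range n).image (fun i => x ^ Fintype.card F ^ i) := by
    refine mem_of_isRoot_of_natDegree_le_card (p := p.map (algebraMap F R))
      (Polynomial.map_ne_zero hp) ?_ ?_ (by simpa [IsRoot, eval_map_algebraMap] using hpy)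
    · simp only [Finset.mem_image, Finset.mem_range]
      rintro _ ⟨i, -, rfl⟩
      simpa [IsRoot, eval_map_algebraMap] using aeval_pow_card_pow_eq_zero hpx i
    · rw [natDegree_map, Finset.card_image_of_injOn (by simpa using hinj), Finset.card_range]
      exact hdeg
  obtain ⟨i, hi, rfl⟩ := Finset.mem_image.mp hy
  exact ⟨i, Finset.mem_range.mp hi, rfl⟩

theorem isConj_inv_of_orderOf_dvd_two {G : Type*} [Group G] {s : G} (h : orderOf s ∣ 2) :
    IsConj s s⁻¹ := by
  rw [inv_eq_of_mul_eq_one_right (b := s) (by rw [← pow_two, ← orderOf_dvd_iff_pow_eq_one.mp h])]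

theorem Matrix.isUnit_of_commute_of_invariant {ι F : Type*} [Fintype ι] [DecidableEq ι] [Field F]
    {A B : Matrix ι ι F}
    (hA : ∀ W : Submodule F (ι → F), (∀ v ∈ W, A.mulVec v ∈ W) → W = ⊥ ∨ W = ⊤)
    (hAB : Commute A B) (hB : B ≠ 0) : IsUnit B := by
  have hinv : ∀ v ∈ LinearMap.ker (toLin' B), A.mulVec v ∈ LinearMap.ker (toLin' B) := by
    intro v hv
    rw [LinearMap.mem_ker, toLin'_apply] at hv ⊢
    rw [mulVec_mulVec, ← hAB.eq, ← mulVec_mulVec, hv, mulVec_zero]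
  rcases hA _ hinv with hbot | htop
  · rw [← mulVec_injective_iff_isUnit]
    exact LinearMap.ker_eq_bot.mp hbot
  · exact absurd (toLin'.map_eq_zero_iff.mp (LinearMap.ker_eq_top.mp htop)) hB

theorem Matrix.isDomain_adjoin_of_invariant {ι F : Type*} [Fintype ι] [DecidableEq ι] [Nonempty ι]
    [Field F] {A : Matrix ι ι F}
    (hA : ∀ W : Submodule F (ι → F), (∀ v ∈ W, A.mulVec v ∈ W) → W = ⊥ ∨ W = ⊤) :
    IsDomain (Algebra.adjoin F {A}) := by
  refine @NoZeroDivisors.to_isDomain _ _ _ ⟨fun {x y} hxy => ?_⟩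
  refine or_iff_not_imp_left.mpr fun hx => Subtype.ext ?_
  have hunit := Matrix.isUnit_of_commute_of_invariant hA (Algebra.commute_of_mem_adjoin_self x.2)
    fun h => hx (Subtype.ext h)
  exact hunit.mul_left_cancel (congrArg Subtype.val (hxy.trans (mul_zero x).symm))

theorem Matrix.GeneralLinearGroup.charpoly_eq_of_isConj {ι R : Type*} [Fintype ι] [DecidableEq ι]
    [CommRing R] {s t : GL ι R} (h : IsConj s t) :
    (s : Matrix ι ι R).charpoly = (t : Matrix ι ι R).charpoly := by
  obtain ⟨c, rfl⟩ := isConj_iff.mp h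
  rw [Units.val_mul, Units.val_mul, coe_units_inv, charpoly_units_conj]

theorem Matrix.GeneralLinearGroup.exists_lt_dvd_pow_card_add_one_of_isConj_inv
    {ι F : Type*} [Fintype ι] [DecidableEq ι] [Nonempty ι] [Field F] [Fintype F] (s : GL ι F)
    (hord : orderOf s = Fintype.card F ^ Fintype.card ι - 1)
    (hirr : ∀ W : Submodule F (ι → F),
      (∀ v ∈ W, (s : Matrix ι ι F).mulVec v ∈ W) → W = ⊥ ∨ W = ⊤)
    (hconj : IsConj s s⁻¹) :
    ∃ i < Fintype.card ι, Fintype.card F ^ Fintype.card ι - 1 ∣ Fintype.card F ^ i + 1 := by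
  set A := (s : Matrix ι ι F)
  have := isDomain_adjoin_of_invariant hirr
  let x : Algebra.adjoin F {A} := ⟨A, Algebra.self_mem_adjoin_singleton F A⟩
  have hx : orderOf x = orderOf s :=
    (orderOf_injective (Algebra.adjoin F {A}).val.toMonoidHom Subtype.val_injective x).symm.trans
      orderOf_units
  have hroot (z : Algebra.adjoin F {A}) (hz : aeval (z : Matrix ι ι F) A.charpoly = 0) :
      aeval z A.charpoly = 0 :=
    Subtype.val_injective ((aeval_algHom_apply (Algebra.adjoin F {A}).val z _).symm.trans hz)
  have hinv : s ^ (orderOf s - 1) = s⁻¹ :=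
    eq_inv_of_mul_eq_one_left (by rw [← pow_succ, Nat.sub_add_cancel (orderOf_pos s),
      pow_orderOf_eq_one])
  have hxinv : aeval (↑(x ^ (orderOf s - 1)) : Matrix ι ι F) A.charpoly = 0 := by
    rw [SubmonoidClass.coe_pow, ← Units.val_pow_eq_pow_val, hinv, charpoly_eq_of_isConj hconj]
    exact aeval_self_charpoly _
  obtain ⟨i, hi, hxi⟩ := FiniteField.exists_eq_pow_card_pow_of_aeval_eq_zero (hx.trans hord)
    A.charpoly_monic.ne_zero A.charpoly_natDegree_eq_dim.le (hroot x A.aeval_self_charpoly)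
    (hroot _ hxinv)
  refine ⟨i, hi, hord ▸ hx ▸ orderOf_dvd_of_pow_eq_one ?_⟩
  rw [pow_succ, ← hxi, ← pow_succ, Nat.sub_add_cancel (orderOf_pos s), ← hx, pow_orderOf_eq_one]

theorem Matrix.GeneralLinearGroup.isConj_inv_of_card_eq_two {F : Type*} [Field F] [Fintype F]
    (hF : Fintype.card F = 2) (s : GL (Fin 2) F) : IsConj s s⁻¹ := by
  -- GL₂(𝔽₂) ≅ S₃, in which every element is conjugate to its inverse.
  have hall : ∀ u : GL (Fin 2) (ZMod 2), IsConj u u⁻¹ := by decide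
  let e : GL (Fin 2) (ZMod 2) ≃* GL (Fin 2) F :=
    Units.mapEquiv (ZMod.ringEquivOfPrime F Nat.prime_two hF).mapMatrix.toMulEquiv
  simpa using e.toMonoidHom.map_isConj (hall (e.symm s))

/-- Let `G = GL_n(q)` and let `s ∈ G` be an element of order `q^n − 1`
acting irreducibly on the natural module.  Then `s` is conjugate to `s⁻¹` in `G` if and
only if `(n,q) ∈ {(2,2),(1,2),(1,3)}`. -/
theorem stmt_2 {F : Type} [Field F] [Fintype F] {n : ℕ} (hn : 0 < n)
    (q : ℕ) (hq : Fintype.card F = q)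
    (s : Matrix.GeneralLinearGroup (Fin n) F)
    (hord : orderOf s = q ^ n - 1)
    (hirr : ∀ W : Submodule F (Fin n → F),
      (∀ v ∈ W, (s : Matrix (Fin n) (Fin n) F).mulVec v ∈ W) → W = ⊥ ∨ W = ⊤) :
    IsConj s s⁻¹ ↔ (n = 2 ∧ q = 2) ∨ (n = 1 ∧ q = 2) ∨ (n = 1 ∧ q = 3) := by
  have : Nonempty (Fin n) := Fin.pos_iff_nonempty.mp hn
  subst hq
  constructor
  · intro hconj
    obtain ⟨i, hi, hdvd⟩ := Matrix.GeneralLinearGroup.exists_lt_dvd_pow_card_add_one_of_isConj_inv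
      s (by rwa [Fintype.card_fin]) hirr hconj
    rw [Fintype.card_fin] at hi hdvd
    have := Nat.le_of_dvd (Nat.succ_pos _) hdvd
    exact Nat.eq_two_two_or_of_pow_le_pow_add_two Fintype.one_lt_card hi (by omega)
  · rintro (⟨rfl, hF⟩ | ⟨rfl, hF⟩ | ⟨rfl, hF⟩)
    · exact Matrix.GeneralLinearGroup.isConj_inv_of_card_eq_two hF s
    all_goals exact isConj_inv_of_orderOf_dvd_two (by rw [hord, hF]; norm_num)
end

section
/- Let r = q² and G = GL_n(r), let s ∈ G be an element of order r^n − 1 acting irreducibly, let σ be the automorphism of G induced entrywise by the Galois automorphism x ↦ x^q of F_r over F_q, and set s₁ = s^{q+1}. Then s₁ is conjugate in G to σ(s₁⁻¹) if and only if n = 1 and q ≤ 3. -/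
/-!
If `g σ(s₁⁻¹) g⁻¹ = s₁`, then `s₁` is a root of the `σ`-twist of the minimal polynomial of
`s₁⁻¹`. Irreducibility of `s` makes `E[s]` a finite field, whose Frobenius `x ↦ x ^ q` is
`σ`-semilinear; as `σ² = 1`, `s₁ ^ q` is a root of the minimal polynomial of `s₁⁻¹` over
`E = 𝔽_{q²}`, hence a Galois conjugate `s₁ ^ (-q^{2j})` with `j < n`. So
`q^{2n} - 1 ∣ (q + 1)(q + q^{2j})`, which for size reasons forces `n = 1`, and then `q - 1 ∣ 2`.
Conversely, for `n = 1` the map `σ` is the `q`-th power on `1 × 1` matrices, and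
`s₁ ^ (q + 1) = s ^ ((q + 1)²) = 1` when `q ≤ 3`, so `g = 1` works.
-/

open Polynomial

theorem Nat.pow_modEq_pow_mod {a : ℕ} (ha : 0 < a) (n j : ℕ) :
    a ^ j ≡ a ^ (j % n) [MOD a ^ n - 1] := by
  have h1 : a ^ n ≡ 1 [MOD a ^ n - 1] := Nat.modEq_sub (Nat.one_le_pow _ _ ha)
  calc a ^ j = (a ^ n) ^ (j / n) * a ^ (j % n) := by rw [← pow_mul, ← pow_add, Nat.div_add_mod]
    _ ≡ 1 ^ (j / n) * a ^ (j % n) [MOD a ^ n - 1] := (h1.pow _).mul_right _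
    _ = a ^ (j % n) := by rw [one_pow, one_mul]

theorem eq_one_of_pow_sub_one_dvd {q n j : ℕ} (hq : 2 ≤ q) (hj : j < n)
    (h : (q ^ 2) ^ n - 1 ∣ (q + 1) * (q + (q ^ 2) ^ j)) : n = 1 := by
  by_contra hn1
  have hle := Nat.le_of_dvd (by positivity) h
  obtain ⟨m, rfl⟩ : ∃ m, n = m + 2 := ⟨n - 2, by omega⟩
  have hj' : (q ^ 2) ^ j ≤ (q ^ 2) ^ (m + 1) := Nat.pow_le_pow_right (by positivity) (by omega)
  rw [pow_succ' _ (m + 1)] at hle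
  have hX : q ^ 2 ≤ (q ^ 2) ^ (m + 1) := Nat.le_self_pow (by omega) _
  -- `(q + 1)(q + q^{2j}) < q^{2n} - 1` unless `q = n = 2`
  rcases Nat.lt_or_ge q 3 with hq3 | hq3
  · obtain rfl : q = 2 := by omega
    rcases m with _ | m
    · interval_cases j <;> revert h <;> decide
    · have : 16 ≤ (2 ^ 2) ^ (m + 1 + 1) := by
        calc 16 = (2 ^ 2) ^ 2 := by norm_num
          _ ≤ (2 ^ 2) ^ (m + 1 + 1) := Nat.pow_le_pow_right (by norm_num) (by omega)
      omega
  · generalize (q ^ 2) ^ (m + 1) = X at hle hj' hX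
    generalize (q ^ 2) ^ j = Y at hle hj'
    rw [Nat.sub_le_iff_le_add] at hle
    have : 3 * (q * X) ≤ q * (q * X) := Nat.mul_le_mul_right _ hq3
    nlinarith

theorem le_three_of_sq_sub_one_dvd {q : ℕ} (hq : 2 ≤ q) (h : q ^ 2 - 1 ∣ (q + 1) * (q + 1)) :
    q ≤ 3 := by
  have hfac : q ^ 2 - 1 = (q + 1) * (q - 1) := by simpa using Nat.sq_sub_sq q 1
  rw [hfac, Nat.mul_dvd_mul_iff_left (by omega)] at h
  have h2 : q - 1 ∣ 2 :=
    (Nat.dvd_add_right (dvd_refl (q - 1))).mp (by rwa [show q - 1 + 2 = q + 1 by omega])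
  have := Nat.le_of_dvd (by norm_num) h2
  omega

theorem eq_one_and_le_three_of_dvd {q n j : ℕ} (hq : 2 ≤ q) (hj : j < n)
    (h : (q ^ 2) ^ n - 1 ∣ (q + 1) * (q + (q ^ 2) ^ j)) : n = 1 ∧ q ≤ 3 := by
  obtain rfl := eq_one_of_pow_sub_one_dvd hq hj h
  obtain rfl : j = 0 := by omega
  exact ⟨rfl, le_three_of_sq_sub_one_dvd hq (by simpa using h)⟩

namespace FiniteField

theorem exists_eq_pow_card_pow_of_aeval_minpoly {K L : Type*} [Field K] [Fintype K]
    [Field L] [Finite L] [Algebra K L] {x y : L} (h : aeval y (minpoly K x) = 0) :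
    ∃ i : ℕ, y = x ^ Fintype.card K ^ i := by
  have hxy : minpoly K y = minpoly K x :=
    (minpoly.eq_of_irreducible_of_monic (minpoly.irreducible (Algebra.IsIntegral.isIntegral x))
      h (minpoly.monic (Algebra.IsIntegral.isIntegral x))).symm
  obtain ⟨g, rfl⟩ := (Normal.minpoly_eq_iff_mem_orbit L).mp hxy
  obtain ⟨i, rfl⟩ := (bijective_frobeniusAlgEquivOfAlgebraic_pow K L).2 g
  refine ⟨i, ?_⟩
  show (frobeniusAlgEquivOfAlgebraic K L ^ (i : ℕ)) x = _
  rw [AlgEquiv.coe_pow, coe_frobeniusAlgEquivOfAlgebraic_iterate]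

theorem exists_eq_pow_card_pow_of_aeval_map_minpoly {K L : Type*} [Field K]
    [Fintype K] [Field L] [Finite L] [Algebra K L] {σ : K →+* K} (hσ : ∀ c, σ (σ c) = c)
    (φ : L →+* L) (hφ : ∀ c, φ (algebraMap K L c) = algebraMap K L (σ c)) {x y : L}
    (h : aeval x ((minpoly K y).map σ) = 0) : ∃ i : ℕ, φ x = y ^ Fintype.card K ^ i := by
  have hσσ : σ.comp σ = RingHom.id K := RingHom.ext hσ
  have hcomm : (algebraMap K L).comp σ = φ.comp (algebraMap K L) :=
    RingHom.ext fun c => (hφ c).symm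
  apply exists_eq_pow_card_pow_of_aeval_minpoly
  have := map_aeval_eq_aeval_map hcomm ((minpoly K y).map σ) x
  rwa [h, map_zero, map_map, hσσ, map_id, eq_comm] at this

theorem exists_pow_add_eq_one_of_aeval_map_minpoly_inv {K L : Type*} [Field K]
    [Fintype K] [Field L] [Finite L] [Algebra K L] {p f q : ℕ} [Fact p.Prime] [CharP K p]
    (hqp : q = p ^ f) (hcard : Fintype.card K = q ^ 2) {σ : K →+* K} (hσ : ∀ c, σ c = c ^ q)
    {x : L} (hx : x ≠ 0) (h : aeval x ((minpoly K x⁻¹).map σ) = 0) :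
    ∃ j : ℕ, x ^ (q + (q ^ 2) ^ j) = 1 := by
  have : CharP L p := charP_of_injective_algebraMap (algebraMap K L).injective p
  have hφ (c : K) : iterateFrobenius L p f (algebraMap K L c) = algebraMap K L (σ c) := by
    rw [iterateFrobenius_def, ← hqp, ← map_pow, hσ]
  have hσσ (c : K) : σ (σ c) = c := by
    rw [hσ, hσ, ← pow_mul, ← sq, ← hcard, FiniteField.pow_card]
  obtain ⟨j, hj⟩ := exists_eq_pow_card_pow_of_aeval_map_minpoly hσσ _ hφ h
  rw [iterateFrobenius_def, ← hqp, hcard, inv_pow] at hj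
  exact ⟨j, by rw [pow_add, hj, inv_mul_cancel₀ (pow_ne_zero _ hx)]⟩

end FiniteField

namespace Matrix

variable {ι E : Type*} [Fintype ι] [DecidableEq ι] [Field E] {t : Matrix ι ι E}

theorem eq_zero_of_mulVec_eq_zero_of_mem_adjoin
    (ht : ∀ W : Submodule E (ι → E), (∀ v ∈ W, t *ᵥ v ∈ W) → W = ⊥ ∨ W = ⊤)
    {a : Matrix ι ι E} (ha : a ∈ Algebra.adjoin E {t}) (ha0 : a ≠ 0) {v : ι → E}
    (hv : a *ᵥ v = 0) : v = 0 := by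
  have hker : ∀ w ∈ LinearMap.ker a.mulVecLin, t *ᵥ w ∈ LinearMap.ker a.mulVecLin := by
    intro w hw
    rw [LinearMap.mem_ker, mulVecLin_apply] at hw ⊢
    rw [mulVec_mulVec, ← (Algebra.commute_of_mem_adjoin_self ha).eq, ← mulVec_mulVec, hw,
      mulVec_zero]
  rcases ht _ hker with hbot | htop
  · exact ker_mulVecLin_eq_bot_iff.mp hbot v hv
  · refine absurd (ext_of_mulVec_single fun i => ?_) ha0
    rw [zero_mulVec, ← mulVecLin_apply, LinearMap.ker_eq_top.mp htop, LinearMap.zero_apply]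

theorem isField_adjoin_of_forall_invariant [Nonempty ι] [Finite E]
    (ht : ∀ W : Submodule E (ι → E), (∀ v ∈ W, t *ᵥ v ∈ W) → W = ⊥ ∨ W = ⊤) :
    IsField (Algebra.adjoin E {t}) := by
  have : NoZeroDivisors (Algebra.adjoin E {t}) := by
    refine ⟨fun {a c} hac => or_iff_not_imp_left.mpr fun ha => Subtype.ext ?_⟩
    refine ext_of_mulVec_single fun i => ?_
    rw [ZeroMemClass.coe_zero, zero_mulVec]
    refine eq_zero_of_mulVec_eq_zero_of_mem_adjoin ht a.2 (fun h => ha (Subtype.ext h)) ?_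
    rw [mulVec_mulVec, ← Subalgebra.coe_mul, hac, Subalgebra.coe_zero, zero_mulVec]
  have := NoZeroDivisors.to_isDomain (Algebra.adjoin E {t})
  exact Finite.isDomain_to_isField _

theorem aeval_units_conj_map {R : Type*} [CommRing R] (g : (Matrix ι ι R)ˣ) (σ : R →+* R)
    (M : Matrix ι ι R) (p : R[X]) :
    aeval ((g : Matrix ι ι R) * M.map σ * (↑g⁻¹ : Matrix ι ι R)) (p.map σ) =
      g * (aeval M p).map σ * (↑g⁻¹ : Matrix ι ι R) := by
  let Φ : Matrix ι ι R →+* Matrix ι ι R :=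
    (MulSemiringAction.toRingHom (ConjAct (Matrix ι ι R)ˣ) _ (ConjAct.toConjAct g)).comp
      σ.mapMatrix
  have hΦ (N : Matrix ι ι R) : Φ N = (g : Matrix ι ι R) * N.map σ * (↑g⁻¹ : Matrix ι ι R) :=
    ConjAct.units_smul_def _ _
  have hcomm : (algebraMap R (Matrix ι ι R)).comp σ = Φ.comp (algebraMap R _) := by
    ext1 c
    have hmap : (algebraMap R (Matrix ι ι R) c).map σ = algebraMap R _ (σ c) := by
      ext i j
      rcases eq_or_ne i j with rfl | hij <;> simp [Matrix.algebraMap_matrix_apply, *]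
    rw [RingHom.comp_apply, RingHom.comp_apply, hΦ, hmap, ← Algebra.commutes,
      Units.mul_inv_cancel_right]
  rw [← hΦ, ← hΦ, map_aeval_eq_aeval_map hcomm]

theorem map_eq_pow_of_unique {R : Type*} [Unique ι] [CommRing R] {σ : R →+* R} {k : ℕ}
    (hσ : ∀ x, σ x = x ^ k) (M : Matrix ι ι R) : M.map σ = M ^ k := by
  obtain rfl : ‹Fintype ι› = Unique.fintype := Subsingleton.elim _ _
  exact uniqueRingEquiv.injective <| by rw [map_pow]; simp [hσ]

end Matrix

namespace Matrix.GeneralLinearGroup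

theorem exists_pow_add_eq_one_of_conj_map_inv {ι E : Type*} [Fintype ι]
    [DecidableEq ι] [Nonempty ι] [Field E] [Fintype E] {p f q : ℕ} [Fact p.Prime] [CharP E p]
    (hqp : q = p ^ f) (hcard : Fintype.card E = q ^ 2) {σ : E →+* E} (hσ : ∀ c, σ c = c ^ q)
    {s x g : GL ι E}
    (hirr : ∀ W : Submodule E (ι → E), (∀ v ∈ W, (s : Matrix ι ι E) *ᵥ v ∈ W) → W = ⊥ ∨ W = ⊤)
    (hx : (x : Matrix ι ι E) ∈ Algebra.adjoin E {(s : Matrix ι ι E)})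
    (hg : (g : Matrix ι ι E) * (↑x⁻¹ : Matrix ι ι E).map σ * (↑g⁻¹ : Matrix ι ι E) = x) :
    ∃ j : ℕ, x ^ (q + (q ^ 2) ^ j) = 1 := by
  set A := Algebra.adjoin E {(s : Matrix ι ι E)}
  let _ : Field A := (isField_adjoin_of_forall_invariant hirr).toField
  set y : A := ⟨x, hx⟩
  have hy0 : y ≠ 0 := fun h => x.ne_zero (congrArg Subtype.val h)
  have hyinv : ((y⁻¹ : A) : Matrix ι ι E) = ↑x⁻¹ :=
    Units.eq_inv_of_mul_eq_one_right (congrArg Subtype.val (inv_mul_cancel₀ hy0))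
  have hmin : minpoly E y⁻¹ = minpoly E (↑x⁻¹ : Matrix ι ι E) := by
    rw [← hyinv]; exact (minpoly.algHom_eq A.val Subtype.val_injective _).symm
  have hroot : aeval y ((minpoly E y⁻¹).map σ) = 0 := by
    apply Subtype.val_injective
    change A.val _ = A.val 0
    rw [← aeval_algHom_apply, map_zero, hmin]
    change aeval (x : Matrix ι ι E) _ = 0
    rw [← hg, aeval_units_conj_map, minpoly.aeval, Matrix.map_zero _ (map_zero σ), mul_zero,
      zero_mul]
  obtain ⟨j, hj⟩ :=
    FiniteField.exists_pow_add_eq_one_of_aeval_map_minpoly_inv hqp hcard hσ hy0 hroot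
  refine ⟨j, Units.ext ?_⟩
  rw [Units.val_pow_eq_pow_val, Units.val_one]
  exact congrArg Subtype.val hj

end Matrix.GeneralLinearGroup

theorem stmt_4_general {E : Type} [Field E] [Fintype E] {n : ℕ} (hn : 0 < n)
    (p q f : ℕ) (hp : p.Prime) (hqp : q = p ^ f)
    (hcard : Fintype.card E = q ^ 2)
    (σ : E →+* E) (hσ : ∀ x : E, σ x = x ^ q)
    (s : Matrix.GeneralLinearGroup (Fin n) E)
    (hord : orderOf s = (q ^ 2) ^ n - 1)
    (hirr : ∀ W : Submodule E (Fin n → E),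
      (∀ v ∈ W, (s : Matrix (Fin n) (Fin n) E).mulVec v ∈ W) → W = ⊥ ∨ W = ⊤)
    (s₁ : Matrix.GeneralLinearGroup (Fin n) E) (hs₁ : s₁ = s ^ (q + 1)) :
    (∃ g : Matrix.GeneralLinearGroup (Fin n) E,
        (g : Matrix (Fin n) (Fin n) E) *
            ((s₁⁻¹ : Matrix.GeneralLinearGroup (Fin n) E) : Matrix (Fin n) (Fin n) E).map σ *
            ((g⁻¹ : Matrix.GeneralLinearGroup (Fin n) E) : Matrix (Fin n) (Fin n) E) =
          (s₁ : Matrix (Fin n) (Fin n) E)) ↔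
      (n = 1 ∧ q ≤ 3) := by
  have hq : 2 ≤ q := by
    have : 1 < q ^ 2 := hcard ▸ Fintype.one_lt_card
    by_contra! h
    interval_cases q <;> simp at this
  have : Fact p.Prime := ⟨hp⟩
  have : CharP E p := charP_of_card_eq_prime_pow (f := f * 2) (by rw [hcard, hqp, pow_mul])
  have : Nonempty (Fin n) := ⟨⟨0, hn⟩⟩
  constructor
  · rintro ⟨g, hg⟩
    have hx : (s₁ : Matrix (Fin n) (Fin n) E) ∈
        Algebra.adjoin E {(s : Matrix (Fin n) (Fin n) E)} := by
      rw [hs₁, Units.val_pow_eq_pow_val]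
      exact pow_mem (Algebra.self_mem_adjoin_singleton E _) _
    obtain ⟨j, hj⟩ :=
      Matrix.GeneralLinearGroup.exists_pow_add_eq_one_of_conj_map_inv hqp hcard hσ hirr hx hg
    rw [hs₁, ← pow_mul] at hj
    have hdvd := hord ▸ orderOf_dvd_of_pow_eq_one hj
    have hmod :=
      ((Nat.pow_modEq_pow_mod (a := q ^ 2) (by positivity) n j).add_left q).mul_left (q + 1)
    exact eq_one_and_le_three_of_dvd hq (Nat.mod_lt j hn) ((hmod.dvd_iff dvd_rfl).mp hdvd)
  · rintro ⟨rfl, hq3⟩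
    have hs₁q : s₁ * s₁ ^ q = 1 := by
      rw [← pow_succ', hs₁, ← pow_mul, ← orderOf_dvd_iff_pow_eq_one, hord]
      interval_cases q <;> decide
    refine ⟨1, ?_⟩
    rw [Units.val_one, one_mul, inv_one, Units.val_one, mul_one, Matrix.map_eq_pow_of_unique hσ]
    exact (Units.val_pow_eq_pow_val s₁⁻¹ q).symm.trans
      (congrArg Units.val (by rw [inv_pow, inv_eq_of_mul_eq_one_left hs₁q]))

/-- Let `r = q²`, `G = GL_n(r)`, let `s ∈ G` be an element of order
`r^n − 1` acting irreducibly, let `σ` be the automorphism of `G` induced entrywise by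
the Galois automorphism `x ↦ x^q` of `F_r` over `F_q`, and set `s₁ = s^{q+1}`.  Then
`s₁` is conjugate in `G` to `σ(s₁⁻¹)` if and only if `n = 1` and `q ≤ 3`. -/
theorem stmt_4 {E : Type} [Field E] [Fintype E] {n : ℕ} (hn : 0 < n)
    (p q f : ℕ) (hp : p.Prime) (hf : 0 < f) (hqp : q = p ^ f)
    (hcard : Fintype.card E = q ^ 2)
    (σ : E →+* E) (hσ : ∀ x : E, σ x = x ^ q)
    (s : Matrix.GeneralLinearGroup (Fin n) E)
    (hord : orderOf s = (q ^ 2) ^ n - 1)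
    (hirr : ∀ W : Submodule E (Fin n → E),
      (∀ v ∈ W, (s : Matrix (Fin n) (Fin n) E).mulVec v ∈ W) → W = ⊥ ∨ W = ⊤)
    (s₁ : Matrix.GeneralLinearGroup (Fin n) E) (hs₁ : s₁ = s ^ (q + 1)) :
    (∃ g : Matrix.GeneralLinearGroup (Fin n) E,
        (g : Matrix (Fin n) (Fin n) E) *
            ((s₁⁻¹ : Matrix.GeneralLinearGroup (Fin n) E) : Matrix (Fin n) (Fin n) E).map σ *
            ((g⁻¹ : Matrix.GeneralLinearGroup (Fin n) E) : Matrix (Fin n) (Fin n) E) =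
          (s₁ : Matrix (Fin n) (Fin n) E)) ↔
      (n = 1 ∧ q ≤ 3) :=
  stmt_4_general hn p q f hp hqp hcard σ hσ s hord hirr s₁ hs₁
end

section
/- Let G₁ = SL_n(q) with natural module V, let P be the stabilizer of an (n−1)-dimensional subspace W₀ of V, write elements of P in block form with H = {diag(h, det(h)⁻¹) : h ∈ GL_{n−1}(q)} and A the unipotent radical consisting of matrices [[Id_{n−1}, w],[0,1]] with w ∈ W₀. Let T₁ ≤ H correspond to a Singer subgroup S ≤ GL_{n−1}(q) of order q^{n−1}−1, with n ≥ 2 and (n,q) ≠ (2,2),(2,3). Then for every 1 ≠ a ∈ A the centralizer C_{T₁}(a) consists of scalar matrices; equivalently, A \ {1} is a union of regular orbits for T₁/Z(G₁) under conjugation. -/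
/-! An element `diag(h, det(h)⁻¹)` commutes with the element of `A` given by `w` exactly when
`w` is an eigenvector of `h` with eigenvalue `det(h)⁻¹`. Since `S` is cyclic, `h ∈ S` commutes with
all of `S`, so this eigenspace is a nonzero `S`-invariant subspace; by irreducibility it is the
whole space, i.e. `h` is scalar. -/

open Matrix

section

variable {R n : Type*} [CommRing R] [Fintype n] [DecidableEq n]

theorem mulVec_eq_smul_of_fromBlocks_commute {M : Matrix n n R} {d : R} {w : n → R}
    (hcomm : fromBlocks M 0 0 (of fun (_ _ : Unit) => d) *
        fromBlocks 1 (of fun i (_ : Unit) => w i) 0 1 =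
      fromBlocks 1 (of fun i (_ : Unit) => w i) 0 1 * fromBlocks M 0 0 (of fun (_ _ : Unit) => d)) :
    M *ᵥ w = d • w := by
  funext i
  simpa [fromBlocks_multiply, mul_apply, mulVec, dotProduct, mul_comm] using
    congrFun (congrFun hcomm (Sum.inl i)) (Sum.inr ())

theorem eq_smul_one_of_commute_of_irreducible [Nontrivial R] (S : Set (GL n R))
    (hirr : ∀ W : Submodule R (n → R),
      (∀ s ∈ S, ∀ v ∈ W, (s : Matrix n n R) *ᵥ v ∈ W) → W = ⊥ ∨ W = ⊤)
    {M : Matrix n n R} (hM : ∀ s ∈ S, Commute M s)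
    {μ : R} {w : n → R} (hw : w ≠ 0) (hμ : M *ᵥ w = μ • w) :
    M = μ • 1 := by
  have hwE : w ∈ Module.End.eigenspace (toLin' M) μ := Module.End.mem_eigenspace_iff.mpr hμ
  have hinv : ∀ s ∈ S, ∀ v ∈ Module.End.eigenspace (toLin' M) μ,
      (s : Matrix n n R) *ᵥ v ∈ Module.End.eigenspace (toLin' M) μ := fun s hs _ hv =>
    Module.End.mapsTo_genEigenspace_of_comm (g := toLin' (s : Matrix n n R))
      ((hM s hs).map toLinAlgEquiv') μ 1 hv
  have htop : Module.End.eigenspace (toLin' M) μ = ⊤ :=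
    (hirr _ hinv).resolve_left fun hbot => hw (by simpa [hbot] using hwE)
  refine toLin'.injective (LinearMap.ext fun v => ?_)
  have hv : v ∈ Module.End.eigenspace (toLin' M) μ := htop ▸ Submodule.mem_top
  simpa using Module.End.mem_eigenspace_iff.mp hv

end

theorem Subgroup.commute_of_isCyclic {G : Type*} [Group G] {S : Subgroup G} [IsCyclic S]
    {g h : G} (hg : g ∈ S) (hh : h ∈ S) : Commute g h :=
  letI := IsCyclic.commGroup (α := S)
  congrArg Subtype.val (mul_comm (⟨g, hg⟩ : S) ⟨h, hh⟩)

theorem stmt_7_general {F : Type} [Field F] {m : ℕ}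
    (S : Subgroup (Matrix.GeneralLinearGroup (Fin m) F))
    (hScyc : IsCyclic ↥S)
    (hSirr : ∀ W : Submodule F (Fin m → F),
      (∀ s ∈ S, ∀ v ∈ W, ((s : Matrix (Fin m) (Fin m) F)).mulVec v ∈ W) → W = ⊥ ∨ W = ⊤)
    (h : Matrix.GeneralLinearGroup (Fin m) F) (hh : h ∈ S)
    (w : Fin m → F) (hw : w ≠ 0)
    (hcomm :
      Matrix.fromBlocks ((h : Matrix (Fin m) (Fin m) F)) 0 0
          (Matrix.of fun (_ _ : Unit) => ((h : Matrix (Fin m) (Fin m) F).det)⁻¹) *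
        Matrix.fromBlocks 1 (Matrix.of fun (i : Fin m) (_ : Unit) => w i) 0 1 =
      Matrix.fromBlocks 1 (Matrix.of fun (i : Fin m) (_ : Unit) => w i) 0 1 *
        Matrix.fromBlocks ((h : Matrix (Fin m) (Fin m) F)) 0 0
          (Matrix.of fun (_ _ : Unit) => ((h : Matrix (Fin m) (Fin m) F).det)⁻¹)) :
    ∃ lam : F, (h : Matrix (Fin m) (Fin m) F) = lam • 1 :=
  ⟨_, eq_smul_one_of_commute_of_irreducible S hSirr
    (fun _ hs => Units.ext_iff.mp (Subgroup.commute_of_isCyclic hh hs).eq) hw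
    (mulVec_eq_smul_of_fromBlocks_commute hcomm)⟩

/-- Let `G₁ = SL_n(q)` (here `n = m + 1`), `P` the stabilizer of an
`(n−1)`-dimensional subspace, `H = {diag(h, det(h)⁻¹)}`, `A` the unipotent radical of
`P`, and let `T₁ ≤ H` correspond to a Singer subgroup `S ≤ GL_{n−1}(q)` of order
`q^{n−1} − 1`, with `n ≥ 2` and `(n,q) ≠ (2,2),(2,3)`.  Then for every `1 ≠ a ∈ A` the
centralizer `C_{T₁}(a)` consists of scalar matrices: if `diag(h, det(h)⁻¹)` with
`h ∈ S` commutes with the element of `A` corresponding to `0 ≠ w`, then `h` is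
scalar. -/
theorem stmt_7 {F : Type} [Field F] [Fintype F] (q : ℕ) (hq : Fintype.card F = q)
    {m : ℕ} (hm : 1 ≤ m) (hexc : ¬ (m + 1 = 2 ∧ (q = 2 ∨ q = 3)))
    (S : Subgroup (Matrix.GeneralLinearGroup (Fin m) F))
    (hScyc : IsCyclic ↥S) (hScard : Nat.card ↥S = q ^ m - 1)
    (hSirr : ∀ W : Submodule F (Fin m → F),
      (∀ s ∈ S, ∀ v ∈ W, ((s : Matrix (Fin m) (Fin m) F)).mulVec v ∈ W) → W = ⊥ ∨ W = ⊤)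
    (h : Matrix.GeneralLinearGroup (Fin m) F) (hh : h ∈ S)
    (w : Fin m → F) (hw : w ≠ 0)
    (hcomm :
      Matrix.fromBlocks ((h : Matrix (Fin m) (Fin m) F)) 0 0
          (Matrix.of fun (_ _ : Unit) => ((h : Matrix (Fin m) (Fin m) F).det)⁻¹) *
        Matrix.fromBlocks 1 (Matrix.of fun (i : Fin m) (_ : Unit) => w i) 0 1 =
      Matrix.fromBlocks 1 (Matrix.of fun (i : Fin m) (_ : Unit) => w i) 0 1 *
        Matrix.fromBlocks ((h : Matrix (Fin m) (Fin m) F)) 0 0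
          (Matrix.of fun (_ _ : Unit) => ((h : Matrix (Fin m) (Fin m) F).det)⁻¹)) :
    ∃ lam : F, (h : Matrix (Fin m) (Fin m) F) = lam • 1 :=
  stmt_7_general S hScyc hSirr h hh w hw hcomm
end

section
/- Let V be a 2n-dimensional unitary space over F_{q²} (or orthogonal of Witt index n over F_q, with appropriate Gram matrix [[0,I],[I,0]]), let X = diag(x, σ(xᵗ)⁻¹) where x ∈ GL_n(r) is irreducible of maximal order subject to X ∈ G(V), and T = ⟨X⟩, excluding the small exceptional cases of Lemma on Singer cycles. Then T is self-centralizing in G(V): C_{G(V)}(X) = T, and in particular C_{G(V)}(X) is cyclic. -/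
/-!
Write `g = [[a, b], [c, d]]`. Commuting with `X = diag(x, y)`, `y = σ(x⁻¹)ᵗ`, makes `b` and `c`
intertwiners between `x` and `y`; by Schur's lemma and the inequivalence of the two
representations, `b = c = 0`. The isometry condition then forces `d = σ(a⁻¹)ᵗ`, so all hinges on
`a ∈ C_{GL_n}(x)`. By Schur again `u ↦ u v₀` is injective on this centralizer, so it has order at
most `qⁿ - 1`. A Singer cycle (multiplication by a generator of `𝔽_{qⁿ}ˣ`) is irreducible of
order `qⁿ - 1` and its block matrix is an isometry, so maximality gives `ord x ≥ qⁿ - 1`. Hence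
`C(x) = ⟨x⟩`, `a = xᵏ` and `g = Xᵏ`.
-/

open Matrix

namespace Matrix

variable {K ι : Type*} [Field K] [Fintype ι]

def ActsIrreducibly (x : Matrix ι ι K) : Prop :=
  ∀ W : Submodule K (ι → K), (∀ v ∈ W, x *ᵥ v ∈ W) → W = ⊥ ∨ W = ⊤

variable [DecidableEq ι]

namespace ActsIrreducibly

variable {x : Matrix ι ι K}

theorem eq_zero_or_isUnit_of_mul_eq_mul_left (hx : x.ActsIrreducibly) {z c : Matrix ι ι K}
    (h : c * x = z * c) : c = 0 ∨ IsUnit c := by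
  have hker : ∀ v ∈ LinearMap.ker c.mulVecLin, x *ᵥ v ∈ LinearMap.ker c.mulVecLin := by
    intro v hv
    simp only [LinearMap.mem_ker, mulVecLin_apply] at hv ⊢
    rw [mulVec_mulVec, h, ← mulVec_mulVec, hv, mulVec_zero]
  rcases hx _ hker with hbot | htop
  · exact .inr (mulVec_injective_iff_isUnit.mp (LinearMap.ker_eq_bot.mp hbot))
  · exact .inl (toLin'.map_eq_zero_iff.mp (by rwa [toLin'_apply', ← LinearMap.ker_eq_top]))

theorem eq_zero_or_isUnit_of_mul_eq_mul_right (hx : x.ActsIrreducibly) {z b : Matrix ι ι K}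
    (h : x * b = b * z) : b = 0 ∨ IsUnit b := by
  have hrange : ∀ v ∈ LinearMap.range b.mulVecLin, x *ᵥ v ∈ LinearMap.range b.mulVecLin := by
    rintro _ ⟨w, rfl⟩
    exact ⟨z *ᵥ w, by simp only [mulVecLin_apply, mulVec_mulVec, h]⟩
  rcases hx _ hrange with hbot | htop
  · exact .inl (toLin'.map_eq_zero_iff.mp (by rwa [toLin'_apply', ← LinearMap.range_eq_bot]))
  · exact .inr (mulVec_surjective_iff_isUnit.mp (LinearMap.range_eq_top.mp htop))

variable {x : GL ι K}

theorem eq_zero_of_mul_eq_mul_left (hx : (x : Matrix ι ι K).ActsIrreducibly) {z c : Matrix ι ι K}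
    (hxz : ¬ ∃ g : GL ι K, (g : Matrix ι ι K) * x * (g⁻¹ : GL ι K) = z) (h : c * x = z * c) :
    c = 0 := by
  refine (hx.eq_zero_or_isUnit_of_mul_eq_mul_left h).resolve_right ?_
  rintro ⟨u, rfl⟩
  exact hxz ⟨u, by rw [h, mul_assoc, Units.mul_inv, mul_one]⟩

theorem eq_zero_of_mul_eq_mul_right (hx : (x : Matrix ι ι K).ActsIrreducibly) {z b : Matrix ι ι K}
    (hxz : ¬ ∃ g : GL ι K, (g : Matrix ι ι K) * x * (g⁻¹ : GL ι K) = z) (h : x * b = b * z) :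
    b = 0 := by
  refine (hx.eq_zero_or_isUnit_of_mul_eq_mul_right h).resolve_right ?_
  rintro ⟨u, rfl⟩
  exact hxz ⟨u⁻¹, by rw [inv_inv, mul_assoc, h, ← mul_assoc, Units.inv_mul, one_mul]⟩

/-- Schur: `u ↦ u *ᵥ v₀` is injective on the centralizer, since a difference of two
centralizing matrices is zero or invertible. -/
theorem card_centralizer_le [Fintype K] [Nonempty ι] (hx : (x : Matrix ι ι K).ActsIrreducibly) :
    Nat.card (Subgroup.centralizer {x}) ≤ Fintype.card K ^ Fintype.card ι - 1 := by
  obtain ⟨v₀, hv₀⟩ := exists_ne (0 : ι → K)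
  have hunit : ∀ {m : Matrix ι ι K}, IsUnit m → m *ᵥ v₀ ≠ 0 := fun hm h0 =>
    hv₀ (mulVec_injective_of_isUnit hm (by rw [h0, mulVec_zero]))
  let f : Subgroup.centralizer {x} → {v : ι → K // v ≠ 0} :=
    fun u => ⟨(u : GL ι K) *ᵥ v₀, hunit (u : GL ι K).isUnit⟩
  have hf : Function.Injective f := by
    rintro ⟨u₁, hu₁⟩ ⟨u₂, hu₂⟩ h
    rw [Subgroup.mem_centralizer_singleton_iff, Units.ext_iff, Units.val_mul,
      Units.val_mul] at hu₁ hu₂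
    have hcomm : ((u₁ : Matrix ι ι K) - u₂.val) * x = x * ((u₁ : Matrix ι ι K) - u₂.val) := by
      rw [sub_mul, mul_sub, hu₁, hu₂]
    have hv : ((u₁ : Matrix ι ι K) - u₂.val) *ᵥ v₀ = 0 := by
      rw [sub_mulVec, sub_eq_zero]
      exact congrArg Subtype.val h
    rcases hx.eq_zero_or_isUnit_of_mul_eq_mul_left hcomm with h0 | hu
    · exact Subtype.ext (Units.ext (sub_eq_zero.mp h0))
    · exact absurd hv (hunit hu)
  calc Nat.card (Subgroup.centralizer {x}) ≤ Nat.card {v : ι → K // v ≠ 0} :=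
        Nat.card_le_card_of_injective f hf
    _ = Fintype.card K ^ Fintype.card ι - 1 := by
        classical
        rw [Nat.card_eq_fintype_card, Fintype.card_subtype_compl, Fintype.card_subtype_eq,
          Fintype.card_fun]

theorem exists_pow_eq_of_commute [Fintype K] [Nonempty ι]
    (hx : (x : Matrix ι ι K).ActsIrreducibly)
    (hord : Fintype.card K ^ Fintype.card ι - 1 ≤ orderOf x) {a : Matrix ι ι K} (ha : IsUnit a)
    (hax : a * x = x * a) : ∃ k : ℕ, a = (x : Matrix ι ι K) ^ k := by
  obtain ⟨a, rfl⟩ := ha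
  have hzpowers : Subgroup.zpowers x = Subgroup.centralizer {x} :=
    Subgroup.eq_of_le_of_card_ge
      (Subgroup.zpowers_le.mpr (Subgroup.mem_centralizer_singleton_iff.mpr rfl))
      (by rw [Nat.card_zpowers]; exact hx.card_centralizer_le.trans hord)
  have ha : a ∈ Subgroup.zpowers x :=
    hzpowers ▸ Subgroup.mem_centralizer_singleton_iff.mpr (Units.ext hax)
  obtain ⟨k, rfl⟩ := (isOfFinOrder_of_finite x).mem_powers_iff_mem_zpowers.mpr ha
  exact ⟨k, Units.val_pow_eq_pow_val x k⟩

end ActsIrreducibly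

/-- Every nonzero element of `L` is a power of `ζ`, so a `ζ`-stable `K`-subspace of `L` is an
ideal of the field `L`. -/
theorem actsIrreducibly_leftMulMatrix {L : Type*} [Field L] [Algebra K L] (b : Module.Basis ι K L)
    {ζ : Lˣ} (hζ : ∀ u : Lˣ, u ∈ Submonoid.powers ζ) :
    (Algebra.leftMulMatrix b (ζ : L)).ActsIrreducibly := by
  intro W hW
  let W' := W.comap b.equivFun.toLinearMap
  have hmul : ∀ w ∈ W', (ζ : L) * w ∈ W' := fun w hw => by
    simpa only [W', Submodule.mem_comap, LinearEquiv.coe_coe, Module.Basis.equivFun_apply,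
      Algebra.leftMulMatrix_mulVec_repr] using hW _ hw
  have hpow : ∀ k : ℕ, ∀ w ∈ W', (ζ : L) ^ k * w ∈ W' := by
    intro k
    induction k with
    | zero => simp
    | succ k ih => exact fun w hw => by rw [pow_succ', mul_assoc]; exact hmul _ (ih w hw)
  let I : Ideal L :=
    { W'.toAddSubmonoid with
      smul_mem' := fun f w hw => by
        rcases eq_or_ne f 0 with rfl | hf
        · simp
        · obtain ⟨k, hk⟩ := hζ (Units.mk0 f hf)
          have hfk : (ζ : L) ^ k = f := congrArg Units.val hk
          exact hfk ▸ hpow k w hw }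
  have hIW' : I.restrictScalars K = W' := rfl
  have hW : W = W'.map b.equivFun.toLinearMap :=
    (Submodule.map_comap_eq_of_surjective b.equivFun.surjective W).symm
  rcases Ideal.eq_bot_or_top I with hI | hI
  · left
    rw [hW, ← hIW', hI, Submodule.restrictScalars_bot, Submodule.map_bot]
  · right
    rw [hW, ← hIW', hI, Submodule.restrictScalars_top, Submodule.map_top, LinearEquiv.range]

variable (K ι) in
theorem exists_actsIrreducibly_orderOf_eq [Fintype K] [Nonempty ι] :
    ∃ y : GL ι K, (y : Matrix ι ι K).ActsIrreducibly ∧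
      orderOf y = Fintype.card K ^ Fintype.card ι - 1 := by
  obtain ⟨p, _⟩ := CharP.exists K
  have : Fact p.Prime := ⟨CharP.char_is_prime K p⟩
  let L := FiniteField.Extension K p (Fintype.card ι)
  let b : Module.Basis ι K L := (Module.finBasisOfFinrankEq K L
    (FiniteField.finrank_extension K p _)).reindex (Fintype.equivFin ι).symm
  obtain ⟨ζ, hζ⟩ := IsCyclic.exists_monoid_generator (α := Lˣ)
  refine ⟨Units.map (Algebra.leftMulMatrix b).toMonoidHom ζ, actsIrreducibly_leftMulMatrix b hζ, ?_⟩
  rw [orderOf_injective _ (Units.map_injective (Algebra.leftMulMatrix_injective b)) ζ,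
    orderOf_eq_card_of_forall_mem_powers hζ, Nat.card_units, FiniteField.natCard_extension,
    Nat.card_eq_fintype_card]

section Contragredient

variable (σ : K →+* K)

def contragredient (u : GL ι K) : Matrix ι ι K :=
  (((u⁻¹ : GL ι K) : Matrix ι ι K).map σ)ᵀ

theorem contragredient_pow (u : GL ι K) (k : ℕ) :
    contragredient σ (u ^ k) = contragredient σ u ^ k := by
  simp only [contragredient, ← transpose_pow, ← inv_pow, Units.val_pow_eq_pow_val]
  rw [← RingHom.mapMatrix_apply, map_pow, RingHom.mapMatrix_apply]

theorem contragredient_mul_transpose_map (u : GL ι K) :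
    contragredient σ u * ((u : Matrix ι ι K).map σ)ᵀ = 1 := by
  rw [contragredient, ← transpose_mul, ← Matrix.map_mul, ← Units.val_mul, mul_inv_cancel,
    Units.val_one, Matrix.map_one _ σ.map_zero σ.map_one, transpose_one]

theorem mul_transpose_map_contragredient {σ : K →+* K} (hσ : Function.Involutive σ)
    (u : GL ι K) : (u : Matrix ι ι K) * ((contragredient σ u).map σ)ᵀ = 1 := by
  rw [contragredient, transpose_map, transpose_transpose, Matrix.map_map, hσ.comp_self,
    Matrix.map_id, ← Units.val_mul, mul_inv_cancel, Units.val_one]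

theorem eq_contragredient_of_mul_eq_one {u : GL ι K} {d : Matrix ι ι K}
    (h : d * ((u : Matrix ι ι K).map σ)ᵀ = 1) : d = contragredient σ u :=
  (inv_eq_left_inv h).symm.trans (inv_eq_left_inv (contragredient_mul_transpose_map σ u))

end Contragredient

section Blocks

variable {R : Type*} [Semiring R]

theorem fromBlocks_mul_fromBlocks_diag_comm_iff (a b c d x y : Matrix ι ι R) :
    fromBlocks a b c d * fromBlocks x 0 0 y = fromBlocks x 0 0 y * fromBlocks a b c d ↔
      a * x = x * a ∧ b * y = x * b ∧ c * x = y * c ∧ d * y = y * d := by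
  simp [fromBlocks_multiply, fromBlocks_inj]

theorem fromBlocks_diag_mul_hyperbolic_mul (σ : R →+* R) (a d : Matrix ι ι R) :
    fromBlocks a 0 0 d * fromBlocks 0 1 1 0 * ((fromBlocks a 0 0 d).map σ)ᵀ =
      fromBlocks 0 (a * (d.map σ)ᵀ) (d * (a.map σ)ᵀ) 0 := by
  simp [fromBlocks_map, fromBlocks_transpose, fromBlocks_multiply]

theorem fromBlocks_contragredient_mul_hyperbolic_mul {σ : K →+* K} (hσ : Function.Involutive σ)
    (u : GL ι K) :
    fromBlocks (u : Matrix ι ι K) 0 0 (contragredient σ u) * fromBlocks 0 1 1 0 *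
        ((fromBlocks (u : Matrix ι ι K) 0 0 (contragredient σ u)).map σ)ᵀ =
      fromBlocks 0 1 1 0 := by
  rw [fromBlocks_diag_mul_hyperbolic_mul, mul_transpose_map_contragredient hσ,
    contragredient_mul_transpose_map]

end Blocks

end Matrix

open scoped Classical

theorem stmt_8_general {E : Type} [Field E] [Fintype E] {n : ℕ} (hn : 0 < n)
    (σ : E →+* E) (hσ2 : ∀ x : E, σ (σ x) = x)
    (x : Matrix.GeneralLinearGroup (Fin n) E)
    (hxirr : ∀ W : Submodule E (Fin n → E),
      (∀ v ∈ W, ((x : Matrix (Fin n) (Fin n) E)).mulVec v ∈ W) → W = ⊥ ∨ W = ⊤)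
    (Γ : Matrix (Fin n ⊕ Fin n) (Fin n ⊕ Fin n) E)
    (hΓ : Γ = Matrix.fromBlocks 0 1 1 0)
    (Xm : Matrix (Fin n ⊕ Fin n) (Fin n ⊕ Fin n) E)
    (hXm : Xm = Matrix.fromBlocks (x : Matrix (Fin n) (Fin n) E) 0 0
        ((((x⁻¹ : Matrix.GeneralLinearGroup (Fin n) E) :
            Matrix (Fin n) (Fin n) E)).map σ).transpose)
    -- `x` has maximal order among irreducible elements `y` whose analogous
    -- block matrix lies in `G(V)`:
    (hmax : ∀ y : Matrix.GeneralLinearGroup (Fin n) E,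
      (∀ W : Submodule E (Fin n → E),
        (∀ v ∈ W, ((y : Matrix (Fin n) (Fin n) E)).mulVec v ∈ W) → W = ⊥ ∨ W = ⊤) →
      (Matrix.fromBlocks (y : Matrix (Fin n) (Fin n) E) 0 0
          ((((y⁻¹ : Matrix.GeneralLinearGroup (Fin n) E) :
              Matrix (Fin n) (Fin n) E)).map σ).transpose * Γ *
          ((Matrix.fromBlocks (y : Matrix (Fin n) (Fin n) E) 0 0
            ((((y⁻¹ : Matrix.GeneralLinearGroup (Fin n) E) :
                Matrix (Fin n) (Fin n) E)).map σ).transpose).map σ).transpose = Γ) →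
      orderOf y ≤ orderOf x)
    -- excluding the exceptional cases: the two diagonal-block representations
    -- are inequivalent:
    (hneq : ¬ ∃ g : Matrix.GeneralLinearGroup (Fin n) E,
      (g : Matrix (Fin n) (Fin n) E) * (x : Matrix (Fin n) (Fin n) E) *
          ((g⁻¹ : Matrix.GeneralLinearGroup (Fin n) E) : Matrix (Fin n) (Fin n) E) =
        ((((x⁻¹ : Matrix.GeneralLinearGroup (Fin n) E) :
            Matrix (Fin n) (Fin n) E)).map σ).transpose) :
    ∀ g : Matrix.GeneralLinearGroup (Fin n ⊕ Fin n) E,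
      (g : Matrix (Fin n ⊕ Fin n) (Fin n ⊕ Fin n) E) * Γ *
          (((g : Matrix (Fin n ⊕ Fin n) (Fin n ⊕ Fin n) E)).map σ).transpose = Γ →
      (((g : Matrix (Fin n ⊕ Fin n) (Fin n ⊕ Fin n) E) * Xm =
          Xm * (g : Matrix (Fin n ⊕ Fin n) (Fin n ⊕ Fin n) E)) ↔
        ∃ k : ℕ, (g : Matrix (Fin n ⊕ Fin n) (Fin n ⊕ Fin n) E) = Xm ^ k) := by
  subst hΓ hXm
  have hxirr : (x : Matrix (Fin n) (Fin n) E).ActsIrreducibly := hxirr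
  have : Nonempty (Fin n) := Fin.pos_iff_nonempty.mp hn
  have hord : Fintype.card E ^ Fintype.card (Fin n) - 1 ≤ orderOf x := by
    obtain ⟨y, hyirr, hy⟩ := exists_actsIrreducibly_orderOf_eq E (Fin n)
    exact hy ▸ hmax y hyirr (fromBlocks_contragredient_mul_hyperbolic_mul hσ2 y)
  intro g hgG
  refine ⟨fun hcomm => ?_, fun ⟨k, hk⟩ => hk ▸ pow_mul_comm' _ k⟩
  obtain ⟨a, b, c, d, hg⟩ : ∃ a b c d, (g : Matrix (Fin n ⊕ Fin n) (Fin n ⊕ Fin n) E) =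
      fromBlocks a b c d := ⟨_, _, _, _, (fromBlocks_toBlocks _).symm⟩
  rw [hg] at hcomm hgG ⊢
  obtain ⟨hax, hb, hc, -⟩ := (fromBlocks_mul_fromBlocks_diag_comm_iff ..).mp hcomm
  obtain rfl : b = 0 := hxirr.eq_zero_of_mul_eq_mul_right hneq hb.symm
  obtain rfl : c = 0 := hxirr.eq_zero_of_mul_eq_mul_left hneq hc
  obtain ⟨-, had, hda, -⟩ :=
    fromBlocks_inj.mp ((fromBlocks_diag_mul_hyperbolic_mul σ a d).symm.trans hgG)
  obtain ⟨k, rfl⟩ := hxirr.exists_pow_eq_of_commute hord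
    ⟨⟨a, _, had, mul_eq_one_comm.mp had⟩, rfl⟩ hax
  rw [← Units.val_pow_eq_pow_val] at hda
  refine ⟨k, ?_⟩
  rw [eq_contragredient_of_mul_eq_one σ hda, contragredient_pow, fromBlocks_diagonal_pow]
  rfl

/-- Let `V` be a `2n`-dimensional unitary (or hyperbolic orthogonal)
space with Gram matrix `Γ = [[0,I],[I,0]]`, let `X = diag(x, σ(xᵗ)⁻¹)` where
`x ∈ GL_n(r)` is irreducible of maximal order subject to `X ∈ G(V)`, and `T = ⟨X⟩`,
excluding the small exceptional cases (where the representations `X ↦ x` and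
`X ↦ σ(xᵗ)⁻¹` are equivalent).  Then `T` is self-centralizing in `G(V)`:
`C_{G(V)}(X) = T`. -/
theorem stmt_8 {E : Type} [Field E] [Fintype E] {n : ℕ} (hn : 0 < n)
    (σ : E →+* E) (hσ2 : ∀ x : E, σ (σ x) = x)
    (x : Matrix.GeneralLinearGroup (Fin n) E)
    (hxirr : ∀ W : Submodule E (Fin n → E),
      (∀ v ∈ W, ((x : Matrix (Fin n) (Fin n) E)).mulVec v ∈ W) → W = ⊥ ∨ W = ⊤)
    (Γ : Matrix (Fin n ⊕ Fin n) (Fin n ⊕ Fin n) E)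
    (hΓ : Γ = Matrix.fromBlocks 0 1 1 0)
    (Xm : Matrix (Fin n ⊕ Fin n) (Fin n ⊕ Fin n) E)
    (hXm : Xm = Matrix.fromBlocks (x : Matrix (Fin n) (Fin n) E) 0 0
        ((((x⁻¹ : Matrix.GeneralLinearGroup (Fin n) E) :
            Matrix (Fin n) (Fin n) E)).map σ).transpose)
    (hXG : Xm * Γ * (Xm.map σ).transpose = Γ)
    -- `x` has maximal order among irreducible elements `y` whose analogous
    -- block matrix lies in `G(V)`:
    (hmax : ∀ y : Matrix.GeneralLinearGroup (Fin n) E,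
      (∀ W : Submodule E (Fin n → E),
        (∀ v ∈ W, ((y : Matrix (Fin n) (Fin n) E)).mulVec v ∈ W) → W = ⊥ ∨ W = ⊤) →
      (Matrix.fromBlocks (y : Matrix (Fin n) (Fin n) E) 0 0
          ((((y⁻¹ : Matrix.GeneralLinearGroup (Fin n) E) :
              Matrix (Fin n) (Fin n) E)).map σ).transpose * Γ *
          ((Matrix.fromBlocks (y : Matrix (Fin n) (Fin n) E) 0 0
            ((((y⁻¹ : Matrix.GeneralLinearGroup (Fin n) E) :
                Matrix (Fin n) (Fin n) E)).map σ).transpose).map σ).transpose = Γ) →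
      orderOf y ≤ orderOf x)
    -- excluding the exceptional cases: the two diagonal-block representations
    -- are inequivalent:
    (hneq : ¬ ∃ g : Matrix.GeneralLinearGroup (Fin n) E,
      (g : Matrix (Fin n) (Fin n) E) * (x : Matrix (Fin n) (Fin n) E) *
          ((g⁻¹ : Matrix.GeneralLinearGroup (Fin n) E) : Matrix (Fin n) (Fin n) E) =
        ((((x⁻¹ : Matrix.GeneralLinearGroup (Fin n) E) :
            Matrix (Fin n) (Fin n) E)).map σ).transpose) :
    ∀ g : Matrix.GeneralLinearGroup (Fin n ⊕ Fin n) E,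
      (g : Matrix (Fin n ⊕ Fin n) (Fin n ⊕ Fin n) E) * Γ *
          (((g : Matrix (Fin n ⊕ Fin n) (Fin n ⊕ Fin n) E)).map σ).transpose = Γ →
      (((g : Matrix (Fin n ⊕ Fin n) (Fin n ⊕ Fin n) E) * Xm =
          Xm * (g : Matrix (Fin n ⊕ Fin n) (Fin n ⊕ Fin n) E)) ↔
        ∃ k : ℕ, (g : Matrix (Fin n ⊕ Fin n) (Fin n ⊕ Fin n) E) = Xm ^ k) :=
  stmt_8_general hn σ hσ2 x hxirr Γ hΓ Xm hXm hmax hneq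
end

section
/- Let 𝔾 be a connected reductive simply connected algebraic group in characteristic p, Fr a Frobenius endomorphism, G = 𝔾^Fr, 𝕋 an Fr-stable maximal torus and T = 𝕋^Fr. Let χ ∈ Irr(G) lie above the irreducible character α of Z(G). Suppose every element of T \ Z(G) is regular (i.e. its centralizer in 𝔾 is a torus, giving C_G(g) = T), and χ(1)·|Z(G)| ≥ |T|^{3/2}. Then χ|_T contains every irreducible character of T lying above α. -/
open scoped Classical BigOperators

/-- The (normalized) inner product of two complex-valued functions on a finite group. -/
noncomputable def charInner (G : Type*) [Group G] [Fintype G] (φ ψ : G → ℂ) : ℂ :=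
  (Fintype.card G : ℂ)⁻¹ * ∑ g : G, φ g * (starRingEnd ℂ) (ψ g)

/-- `χ` is an irreducible complex character of `G`. -/
def IsIrrChar (G : Type) [Group G] (χ : G → ℂ) : Prop :=
  ∃ V : FDRep ℂ G, CategoryTheory.Simple V ∧ χ = V.character

/-!
Split `∑_{t ∈ T} χ(t) conj λ(t)` along `Z` and `T \ Z`. On `Z` both characters are multiples
of `α`, whose values are roots of unity, so that part equals `χ(1) λ(1) |Z| ≥ |T|^{3/2}`.
Off `Z` each term is at most `|T|^{1/2} |λ(t)|`, and Cauchy–Schwarz together with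
`∑_t |λ(t)|² = |T|` and `|λ(1)| ≥ 1` bounds `∑_{t ∉ Z} |λ(t)|` by `|T| - 1`, so the error
`|T|^{1/2} (|T| - 1)` is smaller than the main term. Mathlib states orthogonality with `λ(t⁻¹)`;
it becomes `∑_t |λ(t)|² = |T|` because each `ρ(t)` is diagonalizable with eigenvalues on the
unit circle, so that `λ(t⁻¹) = conj λ(t)`.
-/

open Module

namespace Module.End

section

variable {K V : Type*} [Field K] [AddCommGroup V] [Module K V]

theorem trace_eq_sum_mul_finrank_eigenspace [FiniteDimensional K V] {f g : End K V}
    (hf : ⨆ μ, f.eigenspace μ = ⊤) {c : K → K}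
    (hg : ∀ μ, ∀ v ∈ f.eigenspace μ, g v = c μ • v) :
    LinearMap.trace K V g = ∑ μ : f.Eigenvalues, c μ * finrank K (f.eigenspace μ) := by
  have hint : DirectSum.IsInternal fun μ : f.Eigenvalues => f.eigenspace μ :=
    DirectSum.isInternal_ne_bot_iff.mpr <|
      DirectSum.isInternal_submodule_of_iSupIndep_of_iSup_eq_top f.eigenspaces_iSupIndep hf
  have hg_restrict (μ : f.Eigenvalues) : Set.MapsTo g (f.eigenspace μ) (f.eigenspace μ) := by
    intro v hv
    rw [SetLike.mem_coe, hg μ v hv]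
    exact Submodule.smul_mem _ _ hv
  rw [LinearMap.trace_eq_sum_trace_restrict hint hg_restrict]
  refine Finset.sum_congr rfl fun μ _ => ?_
  have : g.restrict (hg_restrict μ) = c μ • 1 := by
    ext v
    exact hg μ v v.2
  rw [this, map_smul, LinearMap.trace_one, smul_eq_mul]

theorem isSemisimple_of_pow_eq_one {f : End K V} {n : ℕ} (hn : (n : K) ≠ 0) (hf : f ^ n = 1) :
    f.IsSemisimple :=
  isSemisimple_of_squarefree_aeval_eq_zero
    (Polynomial.X_pow_sub_one_separable_iff.mpr hn).squarefree
    (by rw [map_sub, map_pow, Polynomial.aeval_X, map_one, hf, sub_self])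

theorem HasEigenvalue.pow_eq_one {f : End K V} {μ : K} {n : ℕ} (hμ : f.HasEigenvalue μ)
    (hf : f ^ n = 1) : μ ^ n = 1 := by
  obtain ⟨v, hv⟩ := hμ.exists_hasEigenvector
  refine smul_left_injective K hv.2 ?_
  simpa [hf] using (hv.pow_apply n).symm

end

section Complex

variable {V : Type*} [AddCommGroup V] [Module ℂ V]

theorem trace_eq_conj_trace_of_pow_eq_one [FiniteDimensional ℂ V] {f g : End ℂ V} {n : ℕ}
    (hn : n ≠ 0) (hf : f ^ n = 1) (hgf : g * f = 1) :
    LinearMap.trace ℂ V g = starRingEnd ℂ (LinearMap.trace ℂ V f) := by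
  have hspan := (isSemisimple_of_pow_eq_one (by exact_mod_cast hn) hf).iSup_eigenspace_eq_top
  have hg (μ : ℂ) (v : V) (hv : v ∈ f.eigenspace μ) : g v = μ⁻¹ • v := by
    have hfv : f v = μ • v := mem_eigenspace_iff.mp hv
    have hv' : v = μ • g v := by
      rw [← map_smul, ← hfv, ← Module.End.mul_apply, hgf, Module.End.one_apply]
    rcases eq_or_ne μ 0 with rfl | hμ
    · simp [show v = 0 by simpa using hv']
    · exact (eq_inv_smul_iff₀ hμ).mpr hv'.symm
  rw [trace_eq_sum_mul_finrank_eigenspace hspan hg,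
    trace_eq_sum_mul_finrank_eigenspace (c := id) hspan fun μ v hv => mem_eigenspace_iff.mp hv,
    map_sum]
  refine Finset.sum_congr rfl fun μ _ => ?_
  have hμ : ‖(μ : ℂ)‖ = 1 :=
    Complex.norm_eq_one_of_pow_eq_one (HasEigenvalue.pow_eq_one μ.2 hf) hn
  rw [map_mul, map_natCast, id, ← Complex.inv_eq_conj hμ]

end Complex

end Module.End

theorem MonoidHom.norm_apply_eq_one {M : Type*} [Group M] [Finite M] (φ : M →* ℂ) (x : M) :
    ‖φ x‖ = 1 :=
  Complex.norm_eq_one_of_pow_eq_one (by rw [← map_pow, pow_card_eq_one', map_one])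
    Nat.card_pos.ne'

theorem FDRep.char_inv_eq_conj {H : Type} [Group H] [Finite H] (V : FDRep ℂ H) (h : H) :
    V.character h⁻¹ = starRingEnd ℂ (V.character h) :=
  Module.End.trace_eq_conj_trace_of_pow_eq_one (orderOf_pos h).ne'
    (by rw [← map_pow, pow_orderOf_eq_one, map_one])
    (by rw [← map_mul, inv_mul_cancel, map_one])

theorem FDRep.finrank_pos_of_simple {H : Type} [Group H] (V : FDRep ℂ H)
    [CategoryTheory.Simple V] : 0 < finrank ℂ V := by
  have : Nontrivial V := by
    by_contra hV
    rw [not_nontrivial_iff_subsingleton] at hV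
    exact CategoryTheory.id_nonzero V (by ext x; exact Subsingleton.elim _ _)
  exact Module.finrank_pos

namespace IsIrrChar

variable {H : Type} [Group H] {lam : H → ℂ}

theorem exists_apply_one_eq_natCast (hlam : IsIrrChar H lam) :
    ∃ m : ℕ, 0 < m ∧ lam 1 = m := by
  obtain ⟨W, hW, rfl⟩ := hlam
  exact ⟨finrank ℂ W, W.finrank_pos_of_simple, FDRep.char_one W⟩

theorem sum_norm_sq [Fintype H] (hlam : IsIrrChar H lam) :
    ∑ h, ‖lam h‖ ^ 2 = Fintype.card H := by
  obtain ⟨W, hW, rfl⟩ := hlam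
  have hcard : (Nat.card H : ℂ) ≠ 0 := Nat.cast_ne_zero.mpr Nat.card_pos.ne'
  have := invertibleOfNonzero hcard
  have horth := FDRep.char_orthonormal W W
  rw [if_pos ⟨CategoryTheory.Iso.refl W⟩, inv_mul_eq_one₀ hcard, Nat.card_eq_fintype_card]
    at horth
  apply Complex.ofReal_injective
  push_cast
  rw [horth]
  refine Finset.sum_congr rfl fun h _ => ?_
  rw [FDRep.char_inv_eq_conj, Complex.mul_conj']

theorem sum_norm_le_card_sub_one [Fintype H] (hlam : IsIrrChar H lam) {s : Finset H}
    (hs : (1 : H) ∉ s) : ∑ h ∈ s, ‖lam h‖ ≤ Fintype.card H - 1 := by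
  obtain ⟨m, hm, hlam1⟩ := hlam.exists_apply_one_eq_natCast
  have hcard : (s.card : ℝ) + 1 ≤ Fintype.card H := by
    exact_mod_cast (Finset.card_insert_of_notMem hs).symm.trans_le (Finset.card_le_univ _)
  have hsq : ∑ h ∈ s, ‖lam h‖ ^ 2 + ‖lam 1‖ ^ 2 ≤ Fintype.card H := by
    rw [← hlam.sum_norm_sq, add_comm, ← Finset.sum_insert (f := fun h => ‖lam h‖ ^ 2) hs]
    exact Finset.sum_le_univ_sum_of_nonneg fun _ => sq_nonneg _
  have hlam1_sq : 1 ≤ ‖lam 1‖ ^ 2 := by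
    rw [hlam1, Complex.norm_natCast]
    exact one_le_pow₀ (by exact_mod_cast hm)
  refine le_of_pow_le_pow_left₀ two_ne_zero (by linarith) ?_
  calc (∑ h ∈ s, ‖lam h‖) ^ 2 ≤ s.card * ∑ h ∈ s, ‖lam h‖ ^ 2 :=
        sq_sum_le_card_mul_sum_sq
    _ ≤ (Fintype.card H - 1) * (Fintype.card H - 1) :=
        mul_le_mul (by linarith) (by linarith) (Finset.sum_nonneg fun _ _ => sq_nonneg _)
          (by linarith)
    _ = (Fintype.card H - 1) ^ 2 := (sq _).symm

theorem norm_sum_mul_conj_le [Fintype H] (hlam : IsIrrChar H lam) {χ : H → ℂ} {s : Finset H}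
    (hs : (1 : H) ∉ s) {B : ℝ} (hB : 0 ≤ B) (hχ : ∀ h ∈ s, ‖χ h‖ ≤ B) :
    ‖∑ h ∈ s, χ h * starRingEnd ℂ (lam h)‖ ≤ B * (Fintype.card H - 1) :=
  calc _ ≤ ∑ h ∈ s, B * ‖lam h‖ := by
        refine (norm_sum_le _ _).trans (Finset.sum_le_sum fun h hh => ?_)
        rw [norm_mul, Complex.norm_conj]
        exact mul_le_mul_of_nonneg_right (hχ h hh) (norm_nonneg _)
    _ ≤ B * (Fintype.card H - 1) := by
        rw [← Finset.mul_sum]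
        exact mul_le_mul_of_nonneg_left (hlam.sum_norm_le_card_sub_one hs) hB

theorem re_charInner_pos [Fintype H] (K : Subgroup H) {χ α : H → ℂ} (hlam : IsIrrChar H lam)
    (hα : ∀ k ∈ K, ‖α k‖ = 1) (hχα : ∀ k ∈ K, χ k = χ 1 * α k)
    (hlamα : ∀ k ∈ K, lam k = lam 1 * α k)
    (hbound : ∀ h ∉ K, ‖χ h‖ ≤ √(Fintype.card H))
    (hdeg : (Fintype.card H : ℝ) ^ ((3 : ℝ) / 2) ≤ (χ 1).re * Fintype.card K) :
    0 < (charInner H χ lam).re := by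
  obtain ⟨m, hm, hlam1⟩ := hlam.exists_apply_one_eq_natCast
  set N : ℝ := (Fintype.card H : ℝ)
  set A := Finset.univ.filter (· ∈ K)
  have hmain : ∑ h ∈ A, χ h * starRingEnd ℂ (lam h) = Fintype.card K * (χ 1 * m) := by
    have hterm (h : H) (hh : h ∈ A) : χ h * starRingEnd ℂ (lam h) = χ 1 * m := by
      have hK := (Finset.mem_filter.mp hh).2
      rw [hχα h hK, hlamα h hK, hlam1, map_mul, map_natCast]
      calc χ 1 * α h * (m * starRingEnd ℂ (α h))
          = χ 1 * m * (α h * starRingEnd ℂ (α h)) := by ring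
        _ = χ 1 * m := by rw [Complex.mul_conj', hα h hK]; simp
    rw [Finset.sum_congr rfl hterm, Finset.sum_const, nsmul_eq_mul, ← Fintype.card_subtype]
  have htail := (Complex.abs_re_le_norm _).trans <|
    hlam.norm_sum_mul_conj_le (χ := χ) (s := Aᶜ) (by simp [A, K.one_mem]) (Real.sqrt_nonneg N)
      fun h hh => hbound h (by simpa [A] using hh)
  have hsqrt : 0 < √N := Real.sqrt_pos.mpr (Nat.cast_pos.mpr Fintype.card_pos)
  have hdeg' : N * √N ≤ (χ 1).re * Fintype.card K := by
    rwa [show (3 : ℝ) / 2 = 1 + 1 / 2 by norm_num, Real.rpow_add (by positivity), Real.rpow_one,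
      ← Real.sqrt_eq_rpow] at hdeg
  have hsum : 0 < (∑ h, χ h * starRingEnd ℂ (lam h)).re := by
    rw [← Finset.sum_add_sum_compl A, Complex.add_re, hmain]
    have hm1 : (1 : ℝ) ≤ m := by exact_mod_cast hm
    have hmain_re : N * √N ≤ (Fintype.card K * (χ 1 * m)).re :=
      calc N * √N ≤ (χ 1).re * Fintype.card K := hdeg'
        _ ≤ (χ 1).re * Fintype.card K * m :=
          le_mul_of_one_le_right ((by positivity : (0 : ℝ) ≤ N * √N).trans hdeg') hm1
        _ = (Fintype.card K * (χ 1 * m)).re := by simp [Complex.mul_re]; ring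
    linarith [(abs_le.mp htail).1]
  rw [charInner, ← Complex.ofReal_natCast, ← Complex.ofReal_inv, Complex.re_ofReal_mul]
  exact mul_pos (by positivity) hsum

end IsIrrChar

theorem stmt_11_general {G : Type} [Group G] [Fintype G]
    (T Z : Subgroup G) (hZT : Z ≤ T)
    (χ : G → ℂ)
    (lam : ↥T → ℂ) (hlam : IsIrrChar ↥T lam)
    (α : G → ℂ) (hα1 : α 1 = 1)
    (hαmul : ∀ z ∈ Z, ∀ z' ∈ Z, α (z * z') = α z * α z')
    (hχα : ∀ z ∈ Z, χ z = χ 1 * α z)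
    (hlamα : ∀ (z : G) (hz : z ∈ Z), lam ⟨z, hZT hz⟩ = lam 1 * α z)
    (hbound : ∀ g ∈ T, g ∉ Z →
      ‖χ g‖ ≤ Real.sqrt (Fintype.card ↥T))
    (hdeg : ((Fintype.card ↥T : ℝ)) ^ ((3 : ℝ) / 2) ≤
      (χ 1).re * (Fintype.card ↥Z : ℝ)) :
    0 < (charInner ↥T (fun t => χ (t : G)) lam).re := by
  let αZ : Z →* ℂ :=
    { toFun := fun z => α z
      map_one' := hα1
      map_mul' := fun z z' => hαmul z z.2 z' z'.2 }
  have hcard : Fintype.card (Z.subgroupOf T) = Fintype.card Z :=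
    Fintype.card_congr (Subgroup.subgroupOfEquivOfLe hZT).toEquiv
  refine hlam.re_charInner_pos (Z.subgroupOf T) (α := fun t => α t)
    (fun t ht => αZ.norm_apply_eq_one ⟨t, ht⟩) (fun t ht => hχα t ht)
    (fun t ht => hlamα t ht) (fun t ht => hbound t t.2 ht) (by rwa [hcard])

/-- formalizable core: Let `Z ≤ T ≤ G` be finite groups, `χ ∈ Irr(G)`
and `λ ∈ Irr(T)` both lying above the same linear character `α` of `Z`.  Suppose
`|χ(g)| ≤ |T|^{1/2}` for every `g ∈ T \ Z` (as holds when every such `g` is regular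
with `C_G(g) = T`), and `χ(1)·|Z| ≥ |T|^{3/2}`.  Then `χ|_T` contains `λ`.  In
particular `χ|_T` contains every irreducible character of `T` lying above `α`. -/
theorem stmt_11 {G : Type} [Group G] [Fintype G]
    (T Z : Subgroup G) (hZT : Z ≤ T)
    (χ : G → ℂ) (hχ : IsIrrChar G χ)
    (lam : ↥T → ℂ) (hlam : IsIrrChar ↥T lam)
    (α : G → ℂ) (hα1 : α 1 = 1)
    (hαmul : ∀ z ∈ Z, ∀ z' ∈ Z, α (z * z') = α z * α z')
    (hχα : ∀ z ∈ Z, χ z = χ 1 * α z)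
    (hlamα : ∀ (z : G) (hz : z ∈ Z), lam ⟨z, hZT hz⟩ = lam 1 * α z)
    (hbound : ∀ g ∈ T, g ∉ Z →
      ‖χ g‖ ≤ Real.sqrt (Fintype.card ↥T))
    (hdeg : ((Fintype.card ↥T : ℝ)) ^ ((3 : ℝ) / 2) ≤
      (χ 1).re * (Fintype.card ↥Z : ℝ)) :
    0 < (charInner ↥T (fun t => χ (t : G)) lam).re :=
  stmt_11_general T Z hZT χ lam hlam α hα1 hαmul hχα hlamα hbound hdeg
end

section
/- Let G be a finite group of Lie type with Steinberg character St, and let χ be an irreducible character of G = 𝔾^Fr (𝔾 simply connected). Then [χ·St, St]_G = Σ_{(𝕋)} [χ|_T, 1_T]_T / |W(T)|, where the sum ranges over representatives of G-conjugacy classes of Fr-stable maximal tori 𝕋 of 𝔾, T = 𝕋^Fr, and W(T) = (N_𝔾(𝕋)/𝕋)^Fr. Consequently, χ is a constituent of St² if and only if [χ|_T, 1_T]_T > 0 for some maximal torus T. -/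
/-!
Since `St` is real-valued, `[χ·St, St] = [χ, St²]`. Substituting the Deligne–Lusztig
decomposition of `St²` and applying Frobenius reciprocity to each `Ind_T^G 1_T` gives the formula.
Each `[χ|_T, 1_T]_T` is the dimension of the `T`-fixed vectors of the representation affording
`χ`, a natural number; hence `[St², χ]`, the conjugate of `[χ, St²]`, is a sum of nonnegative
rationals with positive weights `1/|W(T)|`, positive exactly when one of the `[χ|_T, 1_T]_T` is.
-/

open scoped Classical BigOperators

section CharInner

variable {G : Type*} [Group G] [Fintype G]

lemma conj_charInner (φ ψ : G → ℂ) : starRingEnd ℂ (charInner G φ ψ) = charInner G ψ φ := by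
  simp only [charInner, map_mul, map_inv₀, map_natCast, map_sum, Complex.conj_conj, mul_comm]

lemma charInner_mul_real_comm (φ ψ σ : G → ℂ) (hσ : ∀ g, starRingEnd ℂ (σ g) = σ g) :
    charInner G (fun g => φ g * σ g) ψ = charInner G φ (fun g => ψ g * σ g) := by
  simp only [charInner, map_mul, hσ, mul_assoc, mul_comm (σ _)]

lemma charInner_sum_smul_right {ι : Type*} [Fintype ι] (φ : G → ℂ) (c : ι → ℂ)
    (ψ : ι → G → ℂ) :
    charInner G φ (fun g => ∑ i, c i * ψ i g) = ∑ i, starRingEnd ℂ (c i) * charInner G φ (ψ i) := by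
  simp only [charInner, map_sum, map_mul, Finset.mul_sum]
  rw [Finset.sum_comm]
  exact Finset.sum_congr rfl fun i _ => Finset.sum_congr rfl fun g _ => by ring

end CharInner

/-- The permutation character `Ind_S^G 1_S` of `G` acting on the cosets `G ⧸ S`. -/
noncomputable def indOneChar {G : Type*} [Group G] [Fintype G] (S : Subgroup G) (g : G) : ℂ :=
  (Fintype.card S : ℂ)⁻¹ * ∑ x : G, if x * g * x⁻¹ ∈ S then 1 else 0

section Frobenius

variable {G : Type*} [Group G] [Fintype G] (S : Subgroup G)

lemma conj_indOneChar (g : G) : starRingEnd ℂ (indOneChar S g) = indOneChar S g := by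
  simp only [indOneChar, map_mul, map_inv₀, map_natCast, map_sum, apply_ite, map_one, map_zero]

lemma sum_mul_ite_conj_mem {f : G → ℂ} (hf : ∀ x g, f (x * g * x⁻¹) = f g) (x : G) :
    ∑ g : G, f g * (if x * g * x⁻¹ ∈ S then 1 else 0) = ∑ t : S, f t := by
  calc ∑ g : G, f g * (if x * g * x⁻¹ ∈ S then 1 else 0)
      = ∑ g : G, f (x * g * x⁻¹) * (if x * g * x⁻¹ ∈ S then 1 else 0) := by simp only [hf]
    _ = ∑ h : G, f h * (if h ∈ S then 1 else 0) :=
        Fintype.sum_equiv (MulAut.conj x).toEquiv _ _ fun _ => rfl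
    _ = ∑ t : S, f t := by
        simp only [mul_ite, mul_one, mul_zero]
        rw [← Finset.sum_filter]
        exact Finset.sum_subtype _ (by simp) _

/-- Frobenius reciprocity for `Ind_S^G 1_S`. -/
theorem charInner_indOneChar {f : G → ℂ} (hf : ∀ x g, f (x * g * x⁻¹) = f g) :
    charInner G f (indOneChar S) = charInner S (fun t => f t) (fun _ => 1) := by
  have hG : (Fintype.card G : ℂ) ≠ 0 := Nat.cast_ne_zero.2 Fintype.card_ne_zero
  calc charInner G f (indOneChar S)
      = (Fintype.card G : ℂ)⁻¹ * ((Fintype.card S : ℂ)⁻¹ *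
          ∑ x : G, ∑ g : G, f g * (if x * g * x⁻¹ ∈ S then 1 else 0)) := by
        rw [charInner]
        simp_rw [conj_indOneChar, indOneChar, mul_left_comm (f _), Finset.mul_sum]
        exact Finset.sum_comm
    _ = charInner S (fun t => f t) (fun _ => 1) := by
        simp only [sum_mul_ite_conj_mem S hf, Finset.sum_const, Finset.card_univ, nsmul_eq_mul,
          charInner, map_one, mul_one]
        field_simp

end Frobenius

lemma IsIrrChar.conj_apply {G : Type} [Group G] {χ : G → ℂ} (hχ : IsIrrChar G χ) (x g : G) :
    χ (x * g * x⁻¹) = χ g := by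
  obtain ⟨V, -, rfl⟩ := hχ
  exact V.char_conj g x

/-- `[χ|_S, 1_S]_S` is the dimension of the `S`-invariants of the representation affording `χ`. -/
lemma IsIrrChar.exists_charInner_restrict_one_eq_natCast {G : Type} [Group G] [Fintype G]
    {χ : G → ℂ} (hχ : IsIrrChar G χ) (S : Subgroup G) :
    ∃ n : ℕ, charInner S (fun t => χ t) (fun _ => 1) = n := by
  obtain ⟨V, -, rfl⟩ := hχ
  have : Invertible (Nat.card S : ℂ) := invertibleOfNonzero (Nat.cast_ne_zero.2 Nat.card_pos.ne')
  have h := Representation.card_inv_mul_sum_char_eq_finrank (V.ρ.comp S.subtype)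
  rw [Nat.card_eq_fintype_card] at h
  change _ * ∑ t : S, V.character t = _ at h
  exact ⟨_, by simpa only [charInner, map_one, mul_one] using h⟩

lemma re_sum_inv_mul_natCast_pos_iff {ι : Type*} [Fintype ι] {W : ι → ℕ} (hW : ∀ i, 0 < W i)
    (n : ι → ℕ) : 0 < (∑ i, (W i : ℂ)⁻¹ * n i).re ↔ ∃ i, 0 < n i := by
  have hreal : ∑ i, (W i : ℂ)⁻¹ * n i = ((∑ i, (W i : ℝ)⁻¹ * n i : ℝ) : ℂ) := by push_cast; rfl
  rw [hreal, Complex.ofReal_re, Finset.sum_pos_iff_of_nonneg fun i _ => by positivity]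
  simp only [Finset.mem_univ, true_and]
  exact exists_congr fun i =>
    (mul_pos_iff_of_pos_left (inv_pos.2 (Nat.cast_pos.2 (hW i)))).trans Nat.cast_pos

theorem stmt_12_general {G : Type} [Group G] [Fintype G]
    (ι : Type) [Fintype ι] (T : ι → Subgroup G) (W : ι → ℕ) (hW : ∀ i, 0 < W i)
    (St χ : G → ℂ) (hχ : IsIrrChar G χ)
    (hStreal : ∀ g : G, (starRingEnd ℂ) (St g) = St g)
    (hDL : ∀ g : G, St g * St g = ∑ i : ι, (W i : ℂ)⁻¹ *
      ((Fintype.card ↥(T i) : ℂ)⁻¹ * ∑ x : G, (if x * g * x⁻¹ ∈ T i then (1 : ℂ) else 0))) :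
    charInner G (fun g => χ g * St g) St =
      (∑ i : ι, (W i : ℂ)⁻¹ * charInner ↥(T i) (fun t => χ (t : G)) (fun _ => 1)) ∧
    (0 < (charInner G (fun g => St g * St g) χ).re ↔
      ∃ i : ι, 0 < (charInner ↥(T i) (fun t => χ (t : G)) (fun _ => 1)).re) := by
  have hsum : charInner G (fun g => χ g * St g) St =
      ∑ i, (W i : ℂ)⁻¹ * charInner (T i) (fun t => χ t) (fun _ => 1) :=
    calc charInner G (fun g => χ g * St g) St
        = charInner G χ (fun g => St g * St g) := charInner_mul_real_comm _ _ _ hStreal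
      _ = charInner G χ (fun g => ∑ i, (W i : ℂ)⁻¹ * indOneChar (T i) g) := congrArg _ (funext hDL)
      _ = _ := by
        simp only [charInner_sum_smul_right, charInner_indOneChar _ hχ.conj_apply, map_inv₀,
          map_natCast]
  refine ⟨hsum, ?_⟩
  choose n hn using fun i => hχ.exists_charInner_restrict_one_eq_natCast (T i)
  have hStSq : charInner G (fun g => St g * St g) χ = ∑ i, (W i : ℂ)⁻¹ * n i := by
    rw [← conj_charInner, ← charInner_mul_real_comm _ _ _ hStreal, hsum]
    simp only [hn, map_sum, map_mul, map_inv₀, map_natCast]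
  simp only [hStSq, hn, Complex.natCast_re, Nat.cast_pos]
  exact re_sum_inv_mul_natCast_pos_iff hW n

/-- Let `G` be a finite group of Lie type with (real-valued) Steinberg
character `St`, and suppose the Deligne–Lusztig formula
`St·St = Σ_{(𝕋)} (1/|W(T)|)·Ind_T^G(1_T)` holds, the sum ranging over a family of
(representatives of classes of) maximal tori `T i` with Weyl-group multiplicities
`W i > 0`.  Then for any irreducible character `χ` of `G`:
`[χ·St, St] = Σ_i [χ|_{T i}, 1]/(W i)`, and consequently `χ` is a constituent of
`St²` if and only if `[χ|_T, 1_T] > 0` for some torus `T` in the family. -/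
theorem stmt_12 {G : Type} [Group G] [Fintype G]
    (ι : Type) [Fintype ι] (T : ι → Subgroup G) (W : ι → ℕ) (hW : ∀ i, 0 < W i)
    (St χ : G → ℂ) (hSt : IsIrrChar G St) (hχ : IsIrrChar G χ)
    (hStreal : ∀ g : G, (starRingEnd ℂ) (St g) = St g)
    (hDL : ∀ g : G, St g * St g = ∑ i : ι, (W i : ℂ)⁻¹ *
      ((Fintype.card ↥(T i) : ℂ)⁻¹ * ∑ x : G, (if x * g * x⁻¹ ∈ T i then (1 : ℂ) else 0))) :
    charInner G (fun g => χ g * St g) St =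
      (∑ i : ι, (W i : ℂ)⁻¹ * charInner ↥(T i) (fun t => χ (t : G)) (fun _ => 1)) ∧
    (0 < (charInner G (fun g => St g * St g) χ).re ↔
      ∃ i : ι, 0 < (charInner ↥(T i) (fun t => χ (t : G)) (fun _ => 1)).re) :=
  stmt_12_general ι T W hW St χ hχ hStreal hDL
end

section
/- (Solomon's observation) Let G be a finite group with character table (χ_i(g_j)) where g_j run over class representatives. For each irreducible character χ of G, the multiplicity [π_G, χ]_G of χ in the conjugation permutation character π_G of G equals Σ_j χ(g_j), the sum of the entries of the row of the character table corresponding to χ. In particular, this row sum is a nonnegative integer. -/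
open scoped Classical BigOperators

/-!
Conjugation makes `ℂ[G]` a permutation representation whose character at `g` is the number of
fixed points `|C_G(g)| = π_G(g)`, so `(1/|G|) Σ_g π_G(g) χ(g⁻¹) = dim Hom_G(V, ℂ[G])` is a natural
number. Since `π_G(g⁻¹) = π_G(g)`, this is also `(1/|G|) Σ_g |C_G(g)| χ(g)`, and grouping that sum
by conjugacy classes with `|C_G(g)| · |g^G| = |G|` leaves exactly `Σ_j χ(g_j)`. Finally
`[π_G, χ]` is the complex conjugate of this real number, as `π_G` is real.
-/

namespace Representation

variable {k G X : Type*} [Field k] [Monoid G] [MulAction G X] [Fintype X]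

theorem character_ofMulAction (g : G) :
    (ofMulAction k G X).character g = Nat.card (MulAction.fixedBy X g) := by
  rw [character, LinearMap.trace_eq_matrix_trace k (MonoidAlgebra.basis X k), Matrix.trace]
  have hdiag (x : X) : (LinearMap.toMatrix (MonoidAlgebra.basis X k) (MonoidAlgebra.basis X k)
      (ofMulAction k G X g)).diag x = if g • x = x then 1 else 0 := by
    simp [Matrix.diag, LinearMap.toMatrix_apply, MonoidAlgebra.basis, Finsupp.single_apply]
  simp only [hdiag, Finset.sum_boole, Nat.card_eq_card_toFinset, MulAction.fixedBy,
    Set.toFinset_ofPred]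

end Representation

section ConjClasses

variable {G : Type*} [Group G]

theorem nat_card_fixed_conj_eq_fixedBy (g : G) :
    Nat.card {x : G // g * x * g⁻¹ = x} =
      Nat.card (MulAction.fixedBy G (ConjAct.toConjAct g)) := by
  simp only [MulAction.fixedBy, ConjAct.toConjAct_smul]
  rfl

theorem nat_card_fixed_conj_eq_centralizer (g : G) :
    Nat.card {x : G // g * x * g⁻¹ = x} = Nat.card (Subgroup.centralizer {g}) :=
  Nat.card_congr <| Equiv.subtypeEquivRight fun x => by
    rw [Subgroup.mem_centralizer_singleton_iff, mul_inv_eq_iff_eq_mul, eq_comm]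

theorem nat_card_fixed_conj_mul_nat_card_carrier (g : G) :
    Nat.card {x : G // g * x * g⁻¹ = x} * Nat.card (ConjClasses.mk g).carrier = Nat.card G := by
  rw [nat_card_fixed_conj_eq_centralizer, Subgroup.nat_card_centralizer_nat_card_stabilizer,
    ← ConjAct.orbit_eq_carrier_conjClasses, Nat.card_coe_set_eq,
    ← MulAction.index_stabilizer, Subgroup.card_mul_index]
  rfl

theorem nat_card_fixed_conj_conj (g h : G) :
    Nat.card {x : G // (h * g * h⁻¹) * x * (h * g * h⁻¹)⁻¹ = x} =
      Nat.card {x : G // g * x * g⁻¹ = x} := by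
  refine (Nat.card_congr <| Equiv.subtypeEquiv (MulAut.conj h).toEquiv fun x => ?_).symm
  simp only [MulEquiv.toEquiv_eq_coe, EquivLike.coe_coe, ← MulAut.conj_apply, ← map_inv,
    ← map_mul, (MulAut.conj h).injective.eq_iff]

variable [Fintype G] {M : Type*} [AddCommMonoid M]

theorem sum_eq_sum_conjClasses_nat_card_smul (φ : G → M)
    (hφ : ∀ g h : G, φ (h * g * h⁻¹) = φ g) :
    ∑ g, φ g = ∑ c : ConjClasses G, Nat.card c.carrier • φ (Quotient.out c) := by
  rw [← Fintype.sum_fiberwise ConjClasses.mk φ]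
  refine Finset.sum_congr rfl fun c _ => ?_
  have hconst (g : {g // ConjClasses.mk g = c}) : φ g = φ (Quotient.out c) := by
    obtain ⟨g, hg⟩ := g
    have hconj : IsConj (Quotient.out c) g := by
      rw [← ConjClasses.mk_eq_mk_iff_isConj, hg]
      exact Quotient.out_eq c
    obtain ⟨h, rfl⟩ := isConj_iff.mp hconj
    exact hφ _ h
  rw [Fintype.sum_congr _ _ hconst, Finset.sum_const, Finset.card_univ,
    ← Nat.card_eq_fintype_card,
    Nat.card_congr (Equiv.subtypeEquivRight fun _ => ConjClasses.mem_carrier_iff_mk_eq.symm)]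

theorem sum_nat_card_fixed_conj_smul (f : G → M) (hf : ∀ g h : G, f (h * g * h⁻¹) = f g) :
    ∑ g, Nat.card {x : G // g * x * g⁻¹ = x} • f g =
      Nat.card G • ∑ c : ConjClasses G, f (Quotient.out c) := by
  rw [sum_eq_sum_conjClasses_nat_card_smul _ fun g h => by rw [nat_card_fixed_conj_conj, hf],
    Finset.smul_sum]
  refine Finset.sum_congr rfl fun c _ => ?_
  have horbit := nat_card_fixed_conj_mul_nat_card_carrier (Quotient.out c)
  rw [show ConjClasses.mk (Quotient.out c) = c from Quotient.out_eq c] at horbit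
  rw [smul_smul, mul_comm, horbit]

end ConjClasses

section ConjRep

variable (k G : Type) [Field k] [Group G] [Fintype G]

noncomputable def conjRep : FDRep k G :=
  FDRep.of ((Representation.ofMulAction k (ConjAct G) G).comp
    (ConjAct.toConjAct : G ≃* ConjAct G).toMonoidHom)

variable {k G}

theorem conjRep_character (g : G) :
    (conjRep k G).character g = Nat.card {x : G // g * x * g⁻¹ = x} := by
  rw [nat_card_fixed_conj_eq_fixedBy, ← Representation.character_ofMulAction]
  rfl

theorem conjRep_character_inv (g : G) :
    (conjRep k G).character g⁻¹ = (conjRep k G).character g := by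
  rw [conjRep_character, conjRep_character, nat_card_fixed_conj_eq_fixedBy,
    nat_card_fixed_conj_eq_fixedBy, map_inv, MulAction.fixedBy_inv]

theorem sum_conjClasses_character_eq_finrank [Invertible (Nat.card G : k)] (V : FDRep k G) :
    ∑ c : ConjClasses G, V.character (Quotient.out c) = Module.finrank k (V ⟶ conjRep k G) := by
  rw [← FDRep.scalar_product_char_eq_finrank_equivariant, ← Equiv.sum_comp (Equiv.inv G)]
  simp only [Equiv.inv_apply, inv_inv, conjRep_character_inv]
  simp only [conjRep_character, ← nsmul_eq_mul]
  rw [sum_nat_card_fixed_conj_smul _ (FDRep.char_conj V), nsmul_eq_mul,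
    inv_mul_cancel_left₀ (Invertible.ne_zero _)]

end ConjRep

/-- Solomon's observation: For each irreducible character `χ` of a
finite group `G`, the multiplicity `[π_G, χ]` of `χ` in the conjugation permutation
character `π_G` (with `π_G g = |C_G(g)|`) equals the sum of the entries of the row of
the character table corresponding to `χ`, i.e. `Σ_j χ(g_j)` over class
representatives `g_j`.  In particular this row sum is a nonnegative integer. -/
theorem stmt_15 {G : Type} [Group G] [Fintype G]
    (χ : G → ℂ) (hχ : IsIrrChar G χ)
    (π : G → ℂ) (hπ : ∀ g : G, π g = (Nat.card {x : G // g * x * g⁻¹ = x} : ℂ)) :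
    charInner G π χ = (∑ c : ConjClasses G, χ (Quotient.out c)) ∧
    ∃ k : ℕ, (∑ c : ConjClasses G, χ (Quotient.out c)) = (k : ℂ) := by
  obtain ⟨V, -, rfl⟩ := hχ
  obtain rfl : π = _ := funext hπ
  have hG : (Nat.card G : ℂ) ≠ 0 := Nat.cast_ne_zero.mpr Nat.card_pos.ne'
  have : Invertible (Nat.card G : ℂ) := invertibleOfNonzero hG
  have hrow := sum_conjClasses_character_eq_finrank V
  have hsum := sum_nat_card_fixed_conj_smul _ (FDRep.char_conj V)
  simp only [nsmul_eq_mul] at hsum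
  refine ⟨?_, _, hrow⟩
  calc charInner G _ V.character
      = starRingEnd ℂ ((Nat.card G : ℂ)⁻¹ *
          ∑ g, (Nat.card {x : G // g * x * g⁻¹ = x} : ℂ) * V.character g) := by
        simp [charInner, Nat.card_eq_fintype_card]
    _ = _ := by rw [hsum, inv_mul_cancel_left₀ hG, hrow, map_natCast]
end

section
/- Let q be a prime power and T₁ the maximal torus of U_n(q) (n odd) consisting of elements g_{i,j} = diag(a^i, a^{−qi}, b^j, b^{−qj}, …, b^{q^{n−3} j}) where a, b have orders q²−1 and q^{n−2}+1 respectively with a^{q−1} = b^{(q^{n−2}+1)/(q+1)}. Let ω^k_{n,q} be the irreducible Weil characters, given by ω^k_{n,q}(h) = ((−1)^n/(q+1)) Σ_{l=0}^{q} γ^{kl} (−q)^{dim Ker(h − c^l)}, where c = a^{q−1} and γ is a fixed complex (q+1)-th root of unity compatible with the construction. Let λ_{s,t} ∈ Irr(T₁) be given by λ_{s,t}(g_{i,j}) = α^{si} β^{tj}. Then λ_{s,t} is a constituent of ω^k_{n,q}|_{T₁} precisely when k ≡ s+t (mod q+1) and t ≢ 0 (mod q^{n−2}+1); and in that case the multiplicity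 is 1 if s ≠ 0 and 2 if s = 0. -/
/-!
Since `(-q)^(d₁ + d₂) = (-q)^d₁ (-q)^d₂`, the inner product of `ω^k` with `λ_{s,t}` separates into
a sum over `l` of `γ^(kl)` times a product of two sums, one over each cyclic factor of `T₁`.
Each of these is a full character sum, which vanishes unless the character is trivial, plus a
correction at the single element where the kernel dimension jumps: `(q² - 1) γ̄^(sl)` for the
first factor and `-(q^(n-2) + 1) γ̄^(tl)` for the second (`n - 2` is odd). What remains is a sum
over the cyclic group of order `q + 1`, evaluated by orthogonality of its characters.
-/

open Finset ComplexConjugate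

theorem sum_range_pow_eq_ite {K : Type*} [Field K] [DecidableEq K] {z : K} {N : ℕ}
    (hz : z ^ N = 1) :
    ∑ i ∈ range N, z ^ i = if z = 1 then (N : K) else 0 := by
  split_ifs with h
  · simp [h]
  · rw [geom_sum_eq h, hz, sub_self, zero_div]

theorem IsPrimitiveRoot.sum_range_pow_mul_eq_ite {K : Type*} [Field K] {ζ : K} {N s : ℕ}
    (hζ : IsPrimitiveRoot ζ N) (hs : s < N) :
    ∑ i ∈ range N, ζ ^ (s * i) = if s = 0 then (N : K) else 0 := by
  classical
  simp_rw [pow_mul]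
  rw [sum_range_pow_eq_ite (by rw [← pow_mul, mul_comm, pow_mul, hζ.pow_eq_one, one_pow])]
  refine if_congr ?_ rfl rfl
  rw [hζ.pow_eq_one_iff_dvd]
  exact ⟨fun h => Nat.eq_zero_of_dvd_of_lt h hs, fun h => h ▸ dvd_zero N⟩

theorem Finset.sum_pow_ite_eq_mul {ι R : Type*} [DecidableEq ι] [CommRing R] {s : Finset ι}
    {m : ι} (hm : m ∈ s) (x : R) (a : ℕ) (f : ι → R) :
    ∑ i ∈ s, x ^ (if i = m then a else 0) * f i = ∑ i ∈ s, f i + (x ^ a - 1) * f m := by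
  have hterm : ∀ i, x ^ (if i = m then a else 0) * f i
      = f i + if i = m then (x ^ a - 1) * f m else 0 := by
    intro i
    split_ifs with h
    · rw [h]; ring
    · ring
  simp_rw [hterm]
  rw [sum_add_distrib, sum_ite_eq' _ _ _, if_pos hm]

theorem Nat.dvd_and_div_eq_iff {d i l : ℕ} (hd : 0 < d) : d ∣ i ∧ i / d = l ↔ i = d * l := by
  constructor
  · rintro ⟨⟨c, rfl⟩, rfl⟩
    rw [Nat.mul_div_cancel_left c hd]
  · rintro rfl
    exact ⟨dvd_mul_right d l, Nat.mul_div_cancel_left l hd⟩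

theorem IsPrimitiveRoot.sum_range_pow_ite_dvd {K : Type*} [Field K] {ζ : K} {N d m s l : ℕ}
    (hζ : IsPrimitiveRoot ζ N) (hN : N = d * m) (hs : s < N) (hl : l < m) (x : K) (a : ℕ) :
    ∑ i ∈ range N, x ^ (if d ∣ i ∧ i / d = l then a else 0) * ζ ^ (s * i)
      = (if s = 0 then (N : K) else 0) + (x ^ a - 1) * (ζ ^ d) ^ (s * l) := by
  have hd : 0 < d := Nat.pos_of_ne_zero fun hd => by simp [hN, hd] at hs
  simp_rw [Nat.dvd_and_div_eq_iff hd]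
  rw [sum_pow_ite_eq_mul (mem_range.2 (hN ▸ Nat.mul_lt_mul_of_pos_left hl hd)),
    hζ.sum_range_pow_mul_eq_ite hs, ← pow_mul, mul_left_comm]

theorem IsPrimitiveRoot.sum_range_pow_mul_conj_pow {ζ : ℂ} {M k : ℕ} (hζ : IsPrimitiveRoot ζ M)
    (hk : k < M) (u : ℕ) :
    ∑ l ∈ range M, ζ ^ (k * l) * conj ζ ^ (u * l) = if k = u % M then (M : ℂ) else 0 := by
  have hM : M ≠ 0 := by omega
  have hconj : conj ζ * ζ = 1 := by
    rw [Complex.conj_mul', hζ.norm'_eq_one hM]; simp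
  have hroot : (ζ ^ k * conj ζ ^ u) ^ M = 1 := by
    rw [mul_pow, ← pow_mul, ← pow_mul, mul_comm k, mul_comm u, pow_mul, pow_mul, ← map_pow,
      hζ.pow_eq_one, map_one, one_pow, one_pow, one_mul]
  simp_rw [pow_mul, ← mul_pow]
  rw [sum_range_pow_eq_ite hroot]
  refine if_congr ?_ rfl rfl
  have hinv : conj ζ ^ u = (ζ ^ u)⁻¹ :=
    eq_inv_of_mul_eq_one_left (by rw [← mul_pow, hconj, one_pow])
  rw [hinv, mul_inv_eq_one₀ (pow_ne_zero _ (hζ.ne_zero hM)), (hζ.isOfFinOrder hM).pow_inj_mod,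
    ← hζ.eq_orderOf, Nat.mod_eq_of_lt hk]

theorem IsPrimitiveRoot.sum_range_pow_mul_ite_add_mul_ite_sub {γ : ℂ} {M k : ℕ}
    (hγ : IsPrimitiveRoot γ M) (hk : k < M) (s t : ℕ) :
    ∑ l ∈ range M, γ ^ (k * l) * ((if s = 0 then 1 else 0) + conj γ ^ (s * l)) *
        ((if t = 0 then 1 else 0) - conj γ ^ (t * l))
      = -M * if k = (s + t) % M ∧ t ≠ 0 then (if s = 0 then 2 else 1) else 0 := by
  rcases eq_or_ne t 0 with rfl | ht
  · simp
  rcases eq_or_ne s 0 with rfl | hs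
  · have hterm : ∀ l, γ ^ (k * l) * ((if (0 : ℕ) = 0 then (1 : ℂ) else 0) + conj γ ^ (0 * l)) *
        ((if t = 0 then 1 else 0) - conj γ ^ (t * l)) = -2 * (γ ^ (k * l) * conj γ ^ (t * l)) := by
      intro l; rw [if_pos rfl, if_neg ht, zero_mul, pow_zero]; ring
    rw [sum_congr rfl fun l _ => hterm l, ← mul_sum, hγ.sum_range_pow_mul_conj_pow hk, zero_add]
    split_ifs <;> simp_all [mul_comm]
  · have hterm : ∀ l, γ ^ (k * l) * ((if s = 0 then (1 : ℂ) else 0) + conj γ ^ (s * l)) *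
        ((if t = 0 then 1 else 0) - conj γ ^ (t * l))
          = -(γ ^ (k * l) * conj γ ^ ((s + t) * l)) := by
      intro l; simp only [if_neg hs, if_neg ht, add_mul, pow_add]; ring
    rw [sum_congr rfl fun l _ => hterm l, sum_neg_distrib, hγ.sum_range_pow_mul_conj_pow hk]
    split_ifs <;> simp_all

theorem Finset.sum_sum_mul_sum_pow_add_mul_mul {ι κ ν R : Type*} [CommSemiring R]
    (s : Finset ι) (t : Finset κ) (u : Finset ν) (c x : R) (g : ν → R) (A : ι → ν → ℕ)
    (B : κ → ν → ℕ) (a : ι → R) (b : κ → R) :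
    ∑ i ∈ s, ∑ j ∈ t, c * (∑ l ∈ u, g l * x ^ (A i l + B j l)) * (a i * b j)
      = c * ∑ l ∈ u, g l * (∑ i ∈ s, x ^ A i l * a i) * ∑ j ∈ t, x ^ B j l * b j := by
  calc _ = ∑ i ∈ s, ∑ j ∈ t, ∑ l ∈ u, c * (g l * ((x ^ A i l * a i) * (x ^ B j l * b j))) := by
        refine sum_congr rfl fun i _ => sum_congr rfl fun j _ => ?_
        rw [mul_sum, sum_mul]
        refine sum_congr rfl fun l _ => ?_
        rw [pow_add]
        ring
    _ = ∑ l ∈ u, ∑ i ∈ s, ∑ j ∈ t, c * (g l * ((x ^ A i l * a i) * (x ^ B j l * b j))) :=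
        (sum_congr rfl fun _ _ => sum_comm).trans sum_comm
    _ = _ := by
        simp only [mul_sum, sum_mul, mul_assoc]
        exact sum_congr rfl fun _ _ => sum_comm

theorem stmt_17_general (q n : ℕ)
    (hn : 3 ≤ n) (hodd : Odd n)
    (q1 q2 : ℕ) (hq1 : q1 = q - 1) (hq2 : q2 = (q ^ (n - 2) + 1) / (q + 1))
    (α β γ : ℂ) (hα : IsPrimitiveRoot α (q ^ 2 - 1))
    (hβ : IsPrimitiveRoot β (q ^ (n - 2) + 1))
    (hγ1 : γ = α ^ q1) (hγ2 : γ = β ^ q2)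
    (dimKer : ℕ → ℕ → ℕ → ℕ)
    (hdim : ∀ i j l : ℕ, dimKer i j l =
      (if q1 ∣ i ∧ i / q1 = l then 2 else 0) +
      (if q2 ∣ j ∧ j / q2 = l then n - 2 else 0))
    (ω : ℕ → ℕ → ℕ → ℂ)
    (hω : ∀ k i j : ℕ, ω k i j =
      ((-1 : ℂ) ^ n / ((q : ℂ) + 1)) *
        ∑ l ∈ Finset.range (q + 1), γ ^ (k * l) * (-(q : ℂ)) ^ dimKer i j l)
    (s t k : ℕ) (hs : s < q ^ 2 - 1) (ht : t < q ^ (n - 2) + 1) (hk : k < q + 1) :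
    (((q ^ 2 - 1) * (q ^ (n - 2) + 1) : ℕ) : ℂ)⁻¹ *
        ∑ i ∈ Finset.range (q ^ 2 - 1), ∑ j ∈ Finset.range (q ^ (n - 2) + 1),
          ω k i j * (starRingEnd ℂ) (α ^ (s * i) * β ^ (t * j)) =
      if k = (s + t) % (q + 1) ∧ t ≠ 0 then (if s = 0 then 2 else 1) else 0 := by
  have hq_sq : 1 ≤ q ^ 2 := by omega
  have hN1 : q ^ 2 - 1 = q1 * (q + 1) := by rw [hq1, mul_comm, ← Nat.sq_sub_sq, one_pow]
  have hoddN2 : Odd (n - 2) := Nat.Odd.sub_even (by omega) hodd even_two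
  have hN2 : q ^ (n - 2) + 1 = q2 * (q + 1) := by
    rw [hq2, Nat.div_mul_cancel (by simpa using hoddN2.nat_add_dvd_pow_add_pow q 1)]
  have hγ : IsPrimitiveRoot γ (q + 1) := hγ1 ▸ hα.pow (by omega) hN1
  have hA : ∀ l < q + 1, ∑ i ∈ range (q ^ 2 - 1),
      (-(q : ℂ)) ^ (if q1 ∣ i ∧ i / q1 = l then 2 else 0) * conj α ^ (s * i)
        = ((q : ℂ) ^ 2 - 1) * ((if s = 0 then 1 else 0) + conj γ ^ (s * l)) := fun l hl => by
    rw [(hα.map_of_injective (starRingEnd ℂ).injective).sum_range_pow_ite_dvd hN1 hs hl,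
      ← map_pow, ← hγ1]
    push_cast [hq_sq]
    split_ifs <;> ring
  have hB : ∀ l < q + 1, ∑ j ∈ range (q ^ (n - 2) + 1),
      (-(q : ℂ)) ^ (if q2 ∣ j ∧ j / q2 = l then n - 2 else 0) * conj β ^ (t * j)
        = ((q : ℂ) ^ (n - 2) + 1) * ((if t = 0 then 1 else 0) - conj γ ^ (t * l)) := fun l hl => by
    rw [(hβ.map_of_injective (starRingEnd ℂ).injective).sum_range_pow_ite_dvd hN2 ht hl,
      ← map_pow, ← hγ2, hoddN2.neg_pow]
    push_cast
    split_ifs <;> ring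
  simp only [hω, hdim, map_mul, map_pow]
  rw [sum_sum_mul_sum_pow_add_mul_mul, sum_congr rfl fun l hl => by
    rw [hA l (mem_range.1 hl), hB l (mem_range.1 hl), mul_left_comm (γ ^ (k * l)),
      mul_mul_mul_comm], ← mul_sum, hγ.sum_range_pow_mul_ite_add_mul_ite_sub hk, hodd.neg_one_pow]
  have hN1ne : ((q ^ 2 - 1 : ℕ) : ℂ) ≠ 0 := Nat.cast_ne_zero.2 (by omega)
  have hN2ne : ((q ^ (n - 2) + 1 : ℕ) : ℂ) ≠ 0 := Nat.cast_ne_zero.2 (by omega)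
  have hq0 : ((q + 1 : ℕ) : ℂ) ≠ 0 := Nat.cast_ne_zero.2 (by omega)
  push_cast [hq_sq] at hN1ne hN2ne hq0 ⊢
  field_simp

/-- With `T₁` the maximal torus of `U_n(q)` (`n` odd) of order
`(q²−1)(q^{n−2}+1)`, parametrized by `g_{i,j}`, the irreducible Weil character
`ω^k_{n,q}` restricted to `T₁` and the linear character `λ_{s,t}(g_{i,j}) = α^{si}β^{tj}`
satisfy: `λ_{s,t}` is a constituent of `ω^k_{n,q}|_{T₁}` precisely when
`k ≡ s + t (mod q+1)` and `t ≢ 0`, with multiplicity `1` if `s ≠ 0` and `2` if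
`s = 0`. -/
theorem stmt_17 (q n : ℕ) (hq : ∃ p f : ℕ, p.Prime ∧ 0 < f ∧ q = p ^ f)
    (hn : 3 ≤ n) (hodd : Odd n)
    (q1 q2 : ℕ) (hq1 : q1 = q - 1) (hq2 : q2 = (q ^ (n - 2) + 1) / (q + 1))
    (α β γ : ℂ) (hα : IsPrimitiveRoot α (q ^ 2 - 1))
    (hβ : IsPrimitiveRoot β (q ^ (n - 2) + 1))
    (hγ1 : γ = α ^ q1) (hγ2 : γ = β ^ q2)
    (dimKer : ℕ → ℕ → ℕ → ℕ)
    (hdim : ∀ i j l : ℕ, dimKer i j l =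
      (if q1 ∣ i ∧ i / q1 = l then 2 else 0) +
      (if q2 ∣ j ∧ j / q2 = l then n - 2 else 0))
    (ω : ℕ → ℕ → ℕ → ℂ)
    (hω : ∀ k i j : ℕ, ω k i j =
      ((-1 : ℂ) ^ n / ((q : ℂ) + 1)) *
        ∑ l ∈ Finset.range (q + 1), γ ^ (k * l) * (-(q : ℂ)) ^ dimKer i j l)
    (s t k : ℕ) (hs : s < q ^ 2 - 1) (ht : t < q ^ (n - 2) + 1) (hk : k < q + 1) :
    (((q ^ 2 - 1) * (q ^ (n - 2) + 1) : ℕ) : ℂ)⁻¹ *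
        ∑ i ∈ Finset.range (q ^ 2 - 1), ∑ j ∈ Finset.range (q ^ (n - 2) + 1),
          ω k i j * (starRingEnd ℂ) (α ^ (s * i) * β ^ (t * j)) =
      if k = (s + t) % (q + 1) ∧ t ≠ 0 then (if s = 0 then 2 else 1) else 0 :=
  stmt_17_general q n hn hodd q1 q2 hq1 hq2 α β γ hα hβ hγ1 hγ2 dimKer hdim ω hω s t k hs ht hk
end
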